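/- arXiv:2306.14985 — 12 statements merged into one kernel-verified Lean document; each statement's English description precedes it below -/
import Mathlib

section
/- Let S be a finite semigroup that is a left regular band of groups, with idempotent-power map ω. Then the set of idempotents of S is closed under multiplication and forms a left regular band: for all x, y ∈ S with x·x = x and y·y = y, one has (x·y)·(x·y) = x·y and x·y·x = x·y. -/
/-! An idempotent `x` is its own idempotent power, since every positive power of `x` is `x`;
so `ω x = x` and (LRBG2) reads `x * y * x = x * y`. With `y * y = y` this also makes `x * y`
idempotent. -/

theorem idempotentPower_eq_self_of_mul_self_eq {S : Type*} [Semigroup S] {ω : S → S}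
    (hpow : ∀ s : S, ∃ n : ℕ, ω s = (fun t => t * s)^[n] s) {x : S} (hx : x * x = x) :
    ω x = x := by
  obtain ⟨n, hn⟩ := hpow x
  rw [hn, Function.iterate_fixed (f := (· * x)) hx]

theorem mul_mul_self_eq_of_mul_mul_left_eq {S : Type*} [Semigroup S] {x y : S}
    (hxyx : x * y * x = x * y) (hy : y * y = y) : x * y * (x * y) = x * y :=
  calc x * y * (x * y) = x * y * x * y := (mul_assoc _ _ _).symm
    _ = x * (y * y) := by rw [hxyx, mul_assoc]
    _ = x * y := by rw [hy]

theorem lrbg_idempotents_form_LRB_general {S : Type*} [Semigroup S] (ω : S → S)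
    (hpow : ∀ s : S, ∃ n : ℕ, ω s = (fun t => t * s)^[n] s)
    (lrbg2 : ∀ s t : S, s * t * ω s = s * t) :
    ∀ x y : S, x * x = x → y * y = y →
      (x * y) * (x * y) = x * y ∧ x * y * x = x * y := by
  intro x y hx hy
  have hxyx : x * y * x = x * y := by
    simpa only [idempotentPower_eq_self_of_mul_self_eq hpow hx] using lrbg2 x y
  exact ⟨mul_mul_self_eq_of_mul_mul_left_eq hxyx hy, hxyx⟩

/-- In a finite left regular band of groups, the set of idempotents is
closed under multiplication and forms a left regular band. -/
theorem lrbg_idempotents_form_LRB {S : Type*} [Semigroup S] [Fintype S] (ω : S → S)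
    (hidem : ∀ s : S, ω s * ω s = ω s)
    (hpow : ∀ s : S, ∃ n : ℕ, ω s = (fun t => t * s)^[n] s)
    (lrbg1 : ∀ s : S, ω s * s = s)
    (lrbg2 : ∀ s t : S, s * t * ω s = s * t) :
    ∀ x y : S, x * x = x → y * y = y →
      (x * y) * (x * y) = x * y ∧ x * y * x = x * y :=
  lrbg_idempotents_form_LRB_general ω hpow lrbg2
end

section
/- Let S be a finite semigroup that is a left regular band of groups, with idempotent-power map ω. For every idempotent x ∈ S and every s ∈ S: ω s = x if and only if x·s = s, s·x = s, and there exists t ∈ S with x·t = t, t·x = t, s·t = x and t·s = x. (Equivalently, the fiber {s ∈ S : s^ω = x} of the map s ↦ s^ω equals the maximal subgroup of S at x, i.e. the group of units of the monoid x·S·x with identity element x.) -/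
/-!
Writing `sᵏ` for the iterates `(· * s)^[k] s`, left multiplication commutes with iterated right
multiplication, so `s` commutes with `ω s` and `x := ω s` is a two-sided identity for `s`; then
`t := x * sⁿ`, where `ω s = sⁿ⁺¹`, is the inverse of `s` in `x S x`. Conversely, if `x * s = s` and
`s * t = x` then `ω s * x = x` and `x * ω s = ω s`, and (LRBG2) applied to `x` and `ω s`, with
`ω x = x`, gives `x * ω s * x = x * ω s`, i.e. `ω s * x = ω s`; hence `ω s = x`.
-/

section Semigroup

variable {S : Type*} [Semigroup S]

theorem iterate_mul_right_apply_mul (a b c : S) (n : ℕ) :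
    (· * c)^[n] (a * b) = a * (· * c)^[n] b := by
  induction n with
  | zero => rfl
  | succ n ih => rw [Function.iterate_succ_apply', ih, Function.iterate_succ_apply', mul_assoc]

theorem commute_self_iterate_mul_right (s : S) (n : ℕ) : Commute s ((· * s)^[n] s) := by
  rw [Commute, SemiconjBy, ← iterate_mul_right_apply_mul, ← Function.iterate_succ_apply' (· * s),
    Function.iterate_succ_apply]

theorem iterate_mul_right_mul_of_mul_eq_self {b c x : S} (hb : b * x = b) (hc : c * x = c)
    (n : ℕ) : (· * c)^[n] b * x = (· * c)^[n] b := by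
  induction n with
  | zero => exact hb
  | succ n ih => rw [Function.iterate_succ_apply', mul_assoc, hc]

/-- The maximal subgroup at an idempotent `x`: the group of units of the monoid `x * S * x`. -/
def maximalSubgroup (x : S) : Set S :=
  {s | x * s = s ∧ s * x = s ∧ ∃ t, x * t = t ∧ t * x = t ∧ s * t = x ∧ t * s = x}

end Semigroup

section LeftRegularBandOfGroups

variable {S : Type*} [Semigroup S] {ω : S → S}

theorem mul_omega_self (hpow : ∀ s : S, ∃ n : ℕ, ω s = (fun t => t * s)^[n] s)
    (lrbg1 : ∀ s : S, ω s * s = s) (s : S) : s * ω s = s := by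
  obtain ⟨n, hn⟩ := hpow s
  rw [hn, (commute_self_iterate_mul_right s n).eq, ← hn, lrbg1]

theorem omega_eq_self_of_isIdempotentElem
    (hpow : ∀ s : S, ∃ n : ℕ, ω s = (fun t => t * s)^[n] s) {x : S} (hx : IsIdempotentElem x) :
    ω x = x := by
  obtain ⟨n, hn⟩ := hpow x
  exact hn.trans (Function.iterate_fixed (f := (· * x)) hx n)

theorem self_mem_maximalSubgroup_omega (hpow : ∀ s : S, ∃ n : ℕ, ω s = (fun t => t * s)^[n] s)
    (lrbg1 : ∀ s : S, ω s * s = s) {s : S} (hidem : IsIdempotentElem (ω s)) :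
    s ∈ maximalSubgroup (ω s) := by
  obtain ⟨n, hn⟩ := hpow s
  have hsω := mul_omega_self hpow lrbg1 s
  refine ⟨lrbg1 s, hsω, (· * s)^[n] (ω s), ?_, ?_, ?_, ?_⟩
  · rw [← iterate_mul_right_apply_mul, hidem]
  · exact iterate_mul_right_mul_of_mul_eq_self hidem hsω n
  · rw [← iterate_mul_right_apply_mul, hsω, hn]
  · rw [← Function.iterate_succ_apply' (· * s), Function.iterate_succ_apply, lrbg1, hn]

theorem omega_eq_of_mul_eq_self_of_mul_eq
    (hpow : ∀ s : S, ∃ n : ℕ, ω s = (fun t => t * s)^[n] s) (lrbg1 : ∀ s : S, ω s * s = s)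
    (lrbg2 : ∀ s t : S, s * t * ω s = s * t) {x s t : S} (hx : IsIdempotentElem x)
    (hxs : x * s = s) (hst : s * t = x) : ω s = x := by
  have hωx : ω s * x = x := by rw [← hst, ← mul_assoc, lrbg1]
  have hxω : x * ω s = ω s := by
    obtain ⟨n, hn⟩ := hpow s
    rw [hn, ← iterate_mul_right_apply_mul, hxs]
  have h := lrbg2 x (ω s)
  rwa [omega_eq_self_of_isIdempotentElem hpow hx, hxω, hωx, eq_comm] at h

end LeftRegularBandOfGroups

theorem lrbg_omega_fiber_eq_maximal_subgroup_general {S : Type*} [Semigroup S] (ω : S → S)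
    (hpow : ∀ s : S, ∃ n : ℕ, ω s = (fun t => t * s)^[n] s)
    (lrbg1 : ∀ s : S, ω s * s = s)
    (lrbg2 : ∀ s t : S, s * t * ω s = s * t) :
    ∀ x s : S, x * x = x →
      (ω s = x ↔
        (x * s = s ∧ s * x = s ∧
          ∃ t : S, x * t = t ∧ t * x = t ∧ s * t = x ∧ t * s = x)) := by
  intro x s hx
  constructor
  · rintro rfl
    exact self_mem_maximalSubgroup_omega hpow lrbg1 hx
  · rintro ⟨hxs, -, t, -, -, hst, -⟩
    exact omega_eq_of_mul_eq_self_of_mul_eq hpow lrbg1 lrbg2 hx hxs hst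

/-- In a finite LRBG, for every idempotent `x` the fiber
`{s : ω s = x}` is exactly the maximal subgroup at `x` (the group of units of
the monoid `x·S·x` with identity `x`). -/
theorem lrbg_omega_fiber_eq_maximal_subgroup {S : Type*} [Semigroup S] [Fintype S] (ω : S → S)
    (hidem : ∀ s : S, ω s * ω s = ω s)
    (hpow : ∀ s : S, ∃ n : ℕ, ω s = (fun t => t * s)^[n] s)
    (lrbg1 : ∀ s : S, ω s * s = s)
    (lrbg2 : ∀ s t : S, s * t * ω s = s * t) :
    ∀ x s : S, x * x = x →
      (ω s = x ↔
        (x * s = s ∧ s * x = s ∧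
          ∃ t : S, x * t = t ∧ t * x = t ∧ s * t = x ∧ t * s = x)) :=
  lrbg_omega_fiber_eq_maximal_subgroup_general ω hpow lrbg1 lrbg2
end

section
/- Let S be a finite semigroup that is a left regular band of groups, with idempotent-power map ω. Then the relation s ∼ t defined by (ω s)·t = s and (ω t)·s = t is an equivalence relation on S (reflexive, symmetric, transitive), and it is moreover a semigroup congruence: if s ∼ t then s·u ∼ t·u and u·s ∼ u·t for every u ∈ S. -/
/-!
Since `ω s` is a power of `s`, it inherits every property of `s` that is preserved by right
multiplication with `s`. This turns LRBG2 into the absorption laws `ω s * z * ω s = ω s * z`,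
`ω (s * u) * ω s = ω (s * u)` and `ω (u * s) * u * ω s = ω (u * s) * u`, and turns
`ω s * ω t * s = s` (true when `s ∼ t`) into `ω s * ω t = ω s`. Transitivity and compatibility
with multiplication are then rewriting with these identities.
-/

/-- The support relation `s ∼ t` on a left regular band of groups. -/
def LRBGsim {S : Type*} [Mul S] (ω : S → S) (s t : S) : Prop :=
  ω s * t = s ∧ ω t * s = t

section

variable {S : Type*} [Semigroup S] {ω : S → S}

namespace LRBG

theorem omega_induction (hpow : ∀ s : S, ∃ n : ℕ, ω s = (fun t => t * s)^[n] s)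
    {s : S} {P : S → Prop} (base : P s) (step : ∀ y, P y → P (y * s)) : P (ω s) := by
  obtain ⟨n, hn⟩ := hpow s
  exact hn ▸ Function.Iterate.rec P base step n

theorem omega_mul_mul_omega (hpow : ∀ s : S, ∃ n : ℕ, ω s = (fun t => t * s)^[n] s)
    (lrbg2 : ∀ s t : S, s * t * ω s = s * t) (s z : S) : ω s * z * ω s = ω s * z :=
  omega_induction hpow (P := fun y => ∀ z, y * z * ω s = y * z) (lrbg2 s)
    (fun y hy z => by rw [mul_assoc y, hy]) z

theorem omega_mul_right_mul_omega (hpow : ∀ s : S, ∃ n : ℕ, ω s = (fun t => t * s)^[n] s)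
    (lrbg2 : ∀ s t : S, s * t * ω s = s * t) (s u : S) : ω (s * u) * ω s = ω (s * u) := by
  obtain ⟨x, hx⟩ : ∃ x, ω (s * u) = s * x :=
    omega_induction hpow (P := fun y => ∃ x, y = s * x) ⟨u, rfl⟩
      fun _ ⟨x, hx⟩ => ⟨x * (s * u), by rw [hx, mul_assoc]⟩
  rw [hx, lrbg2]

theorem omega_mul_left_mul_mul_omega (hpow : ∀ s : S, ∃ n : ℕ, ω s = (fun t => t * s)^[n] s)
    (lrbg2 : ∀ s t : S, s * t * ω s = s * t) (s u : S) :
    ω (u * s) * u * ω s = ω (u * s) * u := by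
  obtain ⟨x, hx⟩ : ∃ x, ω (u * s) * u = u * (s * x) :=
    omega_induction hpow (P := fun y => ∃ x, y * u = u * (s * x)) ⟨u, by simp only [mul_assoc]⟩
      fun y ⟨x, hx⟩ => ⟨x * (s * u), by simp only [← mul_assoc] at hx ⊢; rw [hx]⟩
  rw [hx, mul_assoc u, lrbg2]

end LRBG

namespace LRBGsim

open LRBG

theorem omega_mul_omega (hpow : ∀ s : S, ∃ n : ℕ, ω s = (fun t => t * s)^[n] s)
    (lrbg2 : ∀ s t : S, s * t * ω s = s * t) {s t : S} (h : LRBGsim ω s t) :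
    ω s * ω t = ω s := by
  have fix : ω s * ω t * ω s = ω s :=
    omega_induction hpow (P := fun y => ω s * ω t * y = y) (by rw [mul_assoc, h.2, h.1])
      fun y hy => by rw [← mul_assoc, hy]
  rw [← omega_mul_mul_omega hpow lrbg2, fix]

theorem refl (lrbg1 : ∀ s : S, ω s * s = s) (s : S) : LRBGsim ω s s :=
  ⟨lrbg1 s, lrbg1 s⟩

theorem symm {s t : S} (h : LRBGsim ω s t) : LRBGsim ω t s :=
  ⟨h.2, h.1⟩

theorem trans (hpow : ∀ s : S, ∃ n : ℕ, ω s = (fun t => t * s)^[n] s)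
    (lrbg2 : ∀ s t : S, s * t * ω s = s * t) {s t u : S} (hst : LRBGsim ω s t)
    (htu : LRBGsim ω t u) : LRBGsim ω s u := by
  have half : ∀ {s t u : S}, LRBGsim ω s t → LRBGsim ω t u → ω s * u = s :=
    fun {s t u} hst htu =>
      calc ω s * u = ω s * ω t * u := by rw [omega_mul_omega hpow lrbg2 hst]
        _ = s := by rw [mul_assoc, htu.1, hst.1]
  exact ⟨half hst htu, half htu.symm hst.symm⟩

theorem mul_right (hpow : ∀ s : S, ∃ n : ℕ, ω s = (fun t => t * s)^[n] s)
    (lrbg1 : ∀ s : S, ω s * s = s) (lrbg2 : ∀ s t : S, s * t * ω s = s * t) {s t : S}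
    (h : LRBGsim ω s t) (u : S) : LRBGsim ω (s * u) (t * u) := by
  have half : ∀ {s t : S}, LRBGsim ω s t → ω (s * u) * (t * u) = s * u :=
    fun {s t} h => by
      rw [← omega_mul_right_mul_omega hpow lrbg2 s u, mul_assoc, ← mul_assoc (ω s), h.1, lrbg1]
  exact ⟨half h, half h.symm⟩

theorem mul_left (hpow : ∀ s : S, ∃ n : ℕ, ω s = (fun t => t * s)^[n] s)
    (lrbg1 : ∀ s : S, ω s * s = s) (lrbg2 : ∀ s t : S, s * t * ω s = s * t) {s t : S}
    (h : LRBGsim ω s t) (u : S) : LRBGsim ω (u * s) (u * t) := by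
  have half : ∀ {s t : S}, LRBGsim ω s t → ω (u * s) * (u * t) = u * s :=
    fun {s t} h => by
      have absorb := omega_mul_left_mul_mul_omega hpow lrbg2 s u
      calc ω (u * s) * (u * t) = ω (u * s) * u * ω t * s := by simp only [mul_assoc, h.2]
        _ = ω (u * s) * u * ω s * ω t * s := by rw [absorb]
        _ = ω (u * s) * u * s := by
          rw [mul_assoc _ (ω s), omega_mul_omega hpow lrbg2 h, absorb]
        _ = u * s := by rw [mul_assoc, lrbg1]
  exact ⟨half h, half h.symm⟩

end LRBGsim

end

theorem lrbg_sim_is_congruence_general {S : Type*} [Semigroup S] (ω : S → S)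
    (hpow : ∀ s : S, ∃ n : ℕ, ω s = (fun t => t * s)^[n] s)
    (lrbg1 : ∀ s : S, ω s * s = s)
    (lrbg2 : ∀ s t : S, s * t * ω s = s * t) :
    (∀ s : S, LRBGsim ω s s) ∧
    (∀ s t : S, LRBGsim ω s t → LRBGsim ω t s) ∧
    (∀ s t u : S, LRBGsim ω s t → LRBGsim ω t u → LRBGsim ω s u) ∧
    (∀ s t u : S, LRBGsim ω s t → LRBGsim ω (s * u) (t * u) ∧ LRBGsim ω (u * s) (u * t)) :=
  ⟨LRBGsim.refl lrbg1, fun _ _ => LRBGsim.symm, fun _ _ _ => LRBGsim.trans hpow lrbg2,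
    fun _ _ u h => ⟨h.mul_right hpow lrbg1 lrbg2 u, h.mul_left hpow lrbg1 lrbg2 u⟩⟩

/-- In a finite LRBG, the relation `∼` is an equivalence relation
and a semigroup congruence. -/
theorem lrbg_sim_is_congruence {S : Type*} [Semigroup S] [Fintype S] (ω : S → S)
    (hidem : ∀ s : S, ω s * ω s = ω s)
    (hpow : ∀ s : S, ∃ n : ℕ, ω s = (fun t => t * s)^[n] s)
    (lrbg1 : ∀ s : S, ω s * s = s)
    (lrbg2 : ∀ s t : S, s * t * ω s = s * t) :
    (∀ s : S, LRBGsim ω s s) ∧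
    (∀ s t : S, LRBGsim ω s t → LRBGsim ω t s) ∧
    (∀ s t u : S, LRBGsim ω s t → LRBGsim ω t u → LRBGsim ω s u) ∧
    (∀ s t u : S, LRBGsim ω s t → LRBGsim ω (s * u) (t * u) ∧ LRBGsim ω (u * s) (u * t)) :=
  lrbg_sim_is_congruence_general ω hpow lrbg1 lrbg2
end

section
/- Let S be a finite semigroup that is a left regular band of groups, with idempotent-power map ω. For every s ∈ S and every idempotent x ∈ S, one has s·x ∼ x·s. (Equivalently, the quotient semigroup T = S/∼ has central idempotents, hence is a semilattice of groups.) -/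
namespace LRBG

variable {S : Type*} [Semigroup S]

theorem iterate_mul_right_self_of_mul_self {y : S} (hy : y * y = y) (n : ℕ) :
    (fun t => t * y)^[n] y = y := by
  induction n with
  | zero => rfl
  | succ n ih => rw [Function.iterate_succ_apply', ih, hy]

theorem iterate_mul_right_mul_of_mul_eq {a x : S} (hax : a * x = a) (n : ℕ) :
    (fun t => t * a)^[n] a * x = (fun t => t * a)^[n] a := by
  induction n with
  | zero => exact hax
  | succ n _ => rw [Function.iterate_succ_apply', mul_assoc, hax]

variable {ω : S → S}

theorem omega_eq_self_of_mul_self (hpow : ∀ s : S, ∃ n : ℕ, ω s = (fun t => t * s)^[n] s)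
    {y : S} (hy : y * y = y) : ω y = y := by
  obtain ⟨n, hn⟩ := hpow y
  rw [hn, iterate_mul_right_self_of_mul_self hy]

theorem omega_mul_of_mul_eq (hpow : ∀ s : S, ∃ n : ℕ, ω s = (fun t => t * s)^[n] s)
    {a x : S} (hax : a * x = a) : ω a * x = ω a := by
  obtain ⟨n, hn⟩ := hpow a
  rw [hn, iterate_mul_right_mul_of_mul_eq hax]

theorem mul_mul_self_of_mul_self (hpow : ∀ s : S, ∃ n : ℕ, ω s = (fun t => t * s)^[n] s)
    (lrbg2 : ∀ s t : S, s * t * ω s = s * t) {y : S} (hy : y * y = y) (t : S) :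
    y * t * y = y * t := by
  simpa only [omega_eq_self_of_mul_self hpow hy] using lrbg2 y t

theorem omega_mul_idem_mul_swap (hidem : ∀ s : S, ω s * ω s = ω s)
    (hpow : ∀ s : S, ∃ n : ℕ, ω s = (fun t => t * s)^[n] s)
    (lrbg1 : ∀ s : S, ω s * s = s) (lrbg2 : ∀ s t : S, s * t * ω s = s * t)
    {x : S} (hx : x * x = x) (s : S) : ω (s * x) * (x * s) = s * x := by
  set e := ω (s * x)
  have hex : e * x = e := omega_mul_of_mul_eq hpow (by rw [mul_assoc, hx])
  have hese : e * s * e = e * s := mul_mul_self_of_mul_self hpow lrbg2 (hidem (s * x)) s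
  calc e * (x * s) = e * s := by rw [← mul_assoc, hex]
    _ = e * s * e * x := by rw [mul_assoc (e * s), hex, hese]
    _ = e * s * x := by rw [hese]
    _ = s * x := by rw [mul_assoc, lrbg1]

theorem omega_idem_mul_mul_swap (hpow : ∀ s : S, ∃ n : ℕ, ω s = (fun t => t * s)^[n] s)
    (lrbg1 : ∀ s : S, ω s * s = s) (lrbg2 : ∀ s t : S, s * t * ω s = s * t)
    {x : S} (hx : x * x = x) (s : S) : ω (x * s) * (s * x) = x * s := by
  have hxsx : x * s * x = x * s := mul_mul_self_of_mul_self hpow lrbg2 hx s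
  have hfx : ω (x * s) * x = ω (x * s) := omega_mul_of_mul_eq hpow hxsx
  calc ω (x * s) * (s * x) = ω (x * s) * x * (s * x) := by rw [hfx]
    _ = ω (x * s) * (x * s * x) := by simp only [mul_assoc]
    _ = x * s := by rw [hxsx, lrbg1]

end LRBG

theorem lrbg_quotient_central_idempotents_general {S : Type*} [Semigroup S] (ω : S → S)
    (hidem : ∀ s : S, ω s * ω s = ω s)
    (hpow : ∀ s : S, ∃ n : ℕ, ω s = (fun t => t * s)^[n] s)
    (lrbg1 : ∀ s : S, ω s * s = s)
    (lrbg2 : ∀ s t : S, s * t * ω s = s * t) :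
    ∀ s x : S, x * x = x → LRBGsim ω (s * x) (x * s) :=
  fun s _ hx =>
    ⟨LRBG.omega_mul_idem_mul_swap hidem hpow lrbg1 lrbg2 hx s,
      LRBG.omega_idem_mul_mul_swap hpow lrbg1 lrbg2 hx s⟩

/-- In a finite LRBG, `s·x ∼ x·s` for every element `s` and every
idempotent `x`; hence the quotient `S/∼` has central idempotents. -/
theorem lrbg_quotient_central_idempotents {S : Type*} [Semigroup S] [Fintype S] (ω : S → S)
    (hidem : ∀ s : S, ω s * ω s = ω s)
    (hpow : ∀ s : S, ∃ n : ℕ, ω s = (fun t => t * s)^[n] s)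
    (lrbg1 : ∀ s : S, ω s * s = s)
    (lrbg2 : ∀ s t : S, s * t * ω s = s * t) :
    ∀ s x : S, x * x = x → LRBGsim ω (s * x) (x * s) :=
  lrbg_quotient_central_idempotents_general ω hidem hpow lrbg1 lrbg2
end

section
/- Let S be a finite semigroup that is a left regular band of groups, with idempotent-power map ω, and let x, y ∈ S be idempotents. Then left multiplication by y induces a group morphism λ_{y,x} : G_x → G_{y·x}, s ↦ y·s; concretely: (i) if ω s = x then ω(y·s) = y·x; (ii) if ω s = x and ω t = x then (y·s)·(y·t) = y·(s·t). Moreover, if x' is an idempotent with x ∼ x', then λ_{x,x'} and λ_{x',x} are mutually inverse isomorphisms: for every s with ω s = x one has x·(x'·s) = s, and for every s' with ω s' = x' one has x'·(x·s') = s'. -/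
section Semigroup

variable {S : Type*} [Semigroup S]

theorem WithOne.coe_iterate_mul_right (s : S) (n : ℕ) :
    (((fun t => t * s)^[n] s : S) : WithOne S) = (s : WithOne S) ^ (n + 1) := by
  induction n with
  | zero => simp
  | succ n ih => rw [Function.iterate_succ_apply', WithOne.coe_mul, ih, ← pow_succ]

theorem iterate_mul_right_eq_of_isIdempotentElem {s : S} {a b : ℕ}
    (ha : IsIdempotentElem ((fun t => t * s)^[a] s))
    (hb : IsIdempotentElem ((fun t => t * s)^[b] s)) :
    (fun t => t * s)^[a] s = (fun t => t * s)^[b] s := by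
  have ha' := ha.map (WithOne.coeMulHom (α := S))
  have hb' := hb.map (WithOne.coeMulHom (α := S))
  simp only [WithOne.coeMulHom_apply, WithOne.coe_iterate_mul_right] at ha' hb'
  apply WithOne.coe_injective
  rw [WithOne.coe_iterate_mul_right, WithOne.coe_iterate_mul_right,
    ← ha'.pow_succ_eq b, ← hb'.pow_succ_eq a, ← pow_mul, ← pow_mul, mul_comm]

theorem IsIdempotentElem.iterate_mul_right_self {e : S} (he : IsIdempotentElem e) (n : ℕ) :
    (fun t => t * e)^[n] e = e := by
  apply WithOne.coe_injective
  rw [WithOne.coe_iterate_mul_right]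
  exact (he.map (WithOne.coeMulHom (α := S))).pow_succ_eq n

theorem mul_mul_mul_eq_mul_mul_of_mul_mul_self {y : S} (hy : ∀ t, y * t * y = y * t) (s t : S) :
    y * s * (y * t) = y * (s * t) := by
  rw [← mul_assoc, hy, mul_assoc]

theorem iterate_mul_right_left_mul_of_mul_mul_self {y : S} (hy : ∀ t, y * t * y = y * t)
    (s : S) (n : ℕ) :
    (fun t => t * (y * s))^[n] (y * s) = y * (fun t => t * s)^[n] s := by
  induction n with
  | zero => rfl
  | succ n ih =>
    rw [Function.iterate_succ_apply', Function.iterate_succ_apply', ih,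
      mul_mul_mul_eq_mul_mul_of_mul_mul_self hy]

end Semigroup

theorem lrbg_left_multiplication_group_morphism_general {S : Type*} [Semigroup S]
    (ω : S → S)
    (hidem : ∀ s : S, ω s * ω s = ω s)
    (hpow : ∀ s : S, ∃ n : ℕ, ω s = (fun t => t * s)^[n] s)
    (lrbg1 : ∀ s : S, ω s * s = s)
    (lrbg2 : ∀ s t : S, s * t * ω s = s * t) :
    ∀ x y : S, x * x = x → y * y = y →
      (∀ s : S, ω s = x → ω (y * s) = y * x) ∧
      (∀ s t : S, ω s = x → ω t = x → (y * s) * (y * t) = y * (s * t)) ∧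
      (∀ x' : S, x' * x' = x' → LRBGsim ω x x' →
        (∀ s : S, ω s = x → x * (x' * s) = s) ∧
        (∀ s' : S, ω s' = x' → x' * (x * s') = s')) := by
  have omega_idem : ∀ e : S, e * e = e → ω e = e := fun e he => by
    obtain ⟨n, hn⟩ := hpow e
    rw [hn, IsIdempotentElem.iterate_mul_right_self he]
  intro x y hx hy
  have hy_absorb : ∀ t, y * t * y = y * t := fun t => by
    simpa only [omega_idem y hy] using lrbg2 y t
  have hmul := mul_mul_mul_eq_mul_mul_of_mul_mul_self hy_absorb
  refine ⟨fun s hs => ?_, fun s t _ _ => hmul s t, fun x' hx' ⟨hxx', hx'x⟩ => ⟨?_, ?_⟩⟩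
  · obtain ⟨m, hm⟩ := hpow (y * s)
    obtain ⟨n, hn⟩ := hpow s
    have hyx : y * x = (fun t => t * (y * s))^[n] (y * s) := by
      rw [iterate_mul_right_left_mul_of_mul_mul_self hy_absorb, ← hn, hs]
    rw [hm, hyx]
    apply iterate_mul_right_eq_of_isIdempotentElem
    · rw [← hm]; exact hidem _
    · rw [← hyx]; exact (hmul x x).trans (congrArg _ hx)
  · intro s hs
    rw [← mul_assoc, ← omega_idem x hx, hxx', ← hs, lrbg1]
  · intro s' hs'
    rw [← mul_assoc, ← omega_idem x' hx', hx'x, ← hs', lrbg1]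

/-- In a finite LRBG, for idempotents `x, y`, left multiplication by `y`
induces a group morphism `λ_{y,x} : G_x → G_{y·x}`; and if `x ∼ x'` are idempotents,
then `λ_{x,x'}` and `λ_{x',x}` are mutually inverse isomorphisms. -/
theorem lrbg_left_multiplication_group_morphism {S : Type*} [Semigroup S] [Fintype S]
    (ω : S → S)
    (hidem : ∀ s : S, ω s * ω s = ω s)
    (hpow : ∀ s : S, ∃ n : ℕ, ω s = (fun t => t * s)^[n] s)
    (lrbg1 : ∀ s : S, ω s * s = s)
    (lrbg2 : ∀ s t : S, s * t * ω s = s * t) :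
    ∀ x y : S, x * x = x → y * y = y →
      (∀ s : S, ω s = x → ω (y * s) = y * x) ∧
      (∀ s t : S, ω s = x → ω t = x → (y * s) * (y * t) = y * (s * t)) ∧
      (∀ x' : S, x' * x' = x' → LRBGsim ω x x' →
        (∀ s : S, ω s = x → x * (x' * s) = s) ∧
        (∀ s' : S, ω s' = x' → x' * (x * s') = s')) :=
  lrbg_left_multiplication_group_morphism_general ω hidem hpow lrbg1 lrbg2
end

section
/- Let S be a finite semigroup that is a left regular band of groups, with idempotent-power map ω. For all s, t ∈ S, setting x = ω s and y = ω t, the following are equivalent: (a) s ∼ t; (b) x ∼ y and y·s = t; (c) x ∼ y and x·t = s. -/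
private lemma lrbg_comm_pow {S : Type*} [Semigroup S] (s : S) (n : ℕ) :
    s * (fun t => t * s)^[n] s = (fun t => t * s)^[n] s * s := by
  induction n with
  | zero => rfl
  | succ n ih =>
    rw [Function.iterate_succ_apply']
    rw [← mul_assoc, ih]

private lemma lrbg_fix {S : Type*} [Semigroup S] (x : S) (hx : x * x = x) (n : ℕ) :
    (fun t => t * x)^[n] x = x := by
  induction n with
  | zero => rfl
  | succ n ih => rw [Function.iterate_succ_apply']; simp only [ih, hx]

/-- In a finite LRBG, with `x = ω s` and `y = ω t`, the following
are equivalent: (a) `s ∼ t`; (b) `x ∼ y` and `y·s = t`; (c) `x ∼ y` and `x·t = s`. -/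
theorem lrbg_sim_characterization {S : Type*} [Semigroup S] [Fintype S] (ω : S → S)
    (hidem : ∀ s : S, ω s * ω s = ω s)
    (hpow : ∀ s : S, ∃ n : ℕ, ω s = (fun t => t * s)^[n] s)
    (lrbg1 : ∀ s : S, ω s * s = s)
    (lrbg2 : ∀ s t : S, s * t * ω s = s * t) :
    ∀ s t : S,
      (LRBGsim ω s t ↔ (LRBGsim ω (ω s) (ω t) ∧ ω t * s = t)) ∧
      (LRBGsim ω s t ↔ (LRBGsim ω (ω s) (ω t) ∧ ω s * t = s)) := by
  -- s * ω s = s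
  have L2 : ∀ s : S, s * ω s = s := by
    intro s
    obtain ⟨n, hn⟩ := hpow s
    rw [hn, lrbg_comm_pow, ← hn, lrbg1]
  -- ω (ω s) = ω s
  have L3 : ∀ s : S, ω (ω s) = ω s := by
    intro s
    obtain ⟨n, hn⟩ := hpow (ω s)
    rw [hn, lrbg_fix _ (hidem s)]
  intro s t
  -- forward direction common to both
  have fwd : LRBGsim ω s t → LRBGsim ω (ω s) (ω t) ∧ ω t * s = t ∧ ω s * t = s := by
    rintro ⟨h1, h2⟩
    have ht : t * ω s = t := by
      conv_lhs => rw [← h2, mul_assoc, L2]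
      exact h2
    have hs : s * ω t = s := by
      conv_lhs => rw [← h1, mul_assoc, L2]
      exact h1
    -- ω t * ω s = ω t : since ω t is a power of t and t * ω s = t
    have hyx : ω t * ω s = ω t := by
      obtain ⟨n, hn⟩ := hpow t
      rw [hn]
      clear hn
      induction n with
      | zero => exact ht
      | succ n ih =>
        rw [Function.iterate_succ_apply']
        rw [mul_assoc, ht]
    have hxy : ω s * ω t = ω s := by
      obtain ⟨n, hn⟩ := hpow s
      rw [hn]
      clear hn
      induction n with
      | zero => exact hs
      | succ n ih =>
        rw [Function.iterate_succ_apply']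
        rw [mul_assoc, hs]
    exact ⟨⟨by rw [L3]; exact hxy, by rw [L3]; exact hyx⟩, h2, h1⟩
  constructor
  · constructor
    · intro h; exact ⟨(fwd h).1, (fwd h).2.1⟩
    · rintro ⟨⟨hxy, hyx⟩, hys⟩
      rw [L3] at hxy hyx
      refine ⟨?_, hys⟩
      rw [← hys, ← mul_assoc, hxy, lrbg1]
  · constructor
    · intro h; exact ⟨(fwd h).1, (fwd h).2.2⟩
    · rintro ⟨⟨hxy, hyx⟩, hst⟩
      rw [L3] at hxy hyx
      refine ⟨hst, ?_⟩
      rw [← hst, ← mul_assoc, hyx, lrbg1]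
end

section
/- Let S be a finite semigroup that is a left regular band of groups, with idempotent-power map ω. Then for all s, t ∈ S, ω((ω s)·t) = (ω s)·(ω t). -/
/-!
Adjoin an identity so that positive powers of `S` become monoid powers in `WithOne S`.
If `e = ω s`, then `e` is idempotent and `e·a·e = e·a` for all `a`, so `(e·t)^k = e·t^k`
for `k ≥ 1`. Writing `ω (e·t) = (e·t)^(n+1)` and `ω t = t^(m+1)`, both idempotent, raise
each to the common exponent `(n+1)(m+1)`: `ω (e·t) = e·t^((n+1)(m+1)) = e·ω t`.
-/

lemma pow_succ_mul_succ_of_isIdempotentElem {M : Type*} [Monoid M] {x : M} {n : ℕ}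
    (h : IsIdempotentElem (x ^ (n + 1))) (m : ℕ) : x ^ ((n + 1) * (m + 1)) = x ^ (n + 1) := by
  rw [pow_mul, h.pow_succ_eq]

lemma mul_pow_of_mul_mul_left_eq {M : Type*} [Monoid M] {e : M}
    (he : ∀ a, e * a * e = e * a) (t : M) {k : ℕ} (hk : k ≠ 0) : (e * t) ^ k = e * t ^ k := by
  induction k with
  | zero => exact absurd rfl hk
  | succ k ih =>
    rcases eq_or_ne k 0 with rfl | hk'
    · simp
    · rw [pow_succ, ih hk', ← mul_assoc, he, mul_assoc, ← pow_succ]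

namespace WithOne

lemma coe_iterate_mul_right_s10 {S : Type*} [Semigroup S] (s : S) (n : ℕ) :
    (((fun t => t * s)^[n] s : S) : WithOne S) = (s : WithOne S) ^ (n + 1) := by
  induction n with
  | zero => simp
  | succ n ih => rw [Function.iterate_succ_apply', coe_mul, ih, ← pow_succ]

end WithOne

section IdempotentPower

variable {S : Type*} [Semigroup S] {ω : S → S}

lemma exists_coe_omega_eq_pow (hidem : ∀ s : S, ω s * ω s = ω s)
    (hpow : ∀ s : S, ∃ n : ℕ, ω s = (fun t => t * s)^[n] s) (s : S) :
    ∃ n : ℕ, (ω s : WithOne S) = (s : WithOne S) ^ (n + 1) ∧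
      IsIdempotentElem ((s : WithOne S) ^ (n + 1)) := by
  obtain ⟨n, hn⟩ := hpow s
  have hcoe : (ω s : WithOne S) = (s : WithOne S) ^ (n + 1) := by
    rw [hn, WithOne.coe_iterate_mul_right_s10]
  refine ⟨n, hcoe, ?_⟩
  rw [← hcoe, IsIdempotentElem, ← WithOne.coe_mul, hidem]

lemma omega_omega (hidem : ∀ s : S, ω s * ω s = ω s)
    (hpow : ∀ s : S, ∃ n : ℕ, ω s = (fun t => t * s)^[n] s) (s : S) : ω (ω s) = ω s := by
  obtain ⟨n, hn, -⟩ := exists_coe_omega_eq_pow hidem hpow (ω s)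
  have hidem' : IsIdempotentElem (ω s : WithOne S) := by
    rw [IsIdempotentElem, ← WithOne.coe_mul, hidem]
  exact WithOne.coe_injective (hn.trans (hidem'.pow_succ_eq n))

lemma coe_omega_mul_mul_coe_omega (hidem : ∀ s : S, ω s * ω s = ω s)
    (hpow : ∀ s : S, ∃ n : ℕ, ω s = (fun t => t * s)^[n] s)
    (lrbg2 : ∀ s t : S, s * t * ω s = s * t) (s : S) :
    ∀ a : WithOne S, (ω s : WithOne S) * a * ω s = ω s * a
  | 1 => by rw [mul_one, ← WithOne.coe_mul, hidem]
  | (a : S) => by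
    rw [← WithOne.coe_mul, ← WithOne.coe_mul]
    simpa only [omega_omega hidem hpow] using congrArg WithOne.coe (lrbg2 (ω s) a)

end IdempotentPower

theorem lrbg_omega_of_omega_mul_general {S : Type*} [Semigroup S] (ω : S → S)
    (hidem : ∀ s : S, ω s * ω s = ω s)
    (hpow : ∀ s : S, ∃ n : ℕ, ω s = (fun t => t * s)^[n] s)
    (lrbg2 : ∀ s t : S, s * t * ω s = s * t) :
    ∀ s t : S, ω (ω s * t) = ω s * ω t := by
  intro s t
  obtain ⟨n, hn, hn_idem⟩ := exists_coe_omega_eq_pow hidem hpow (ω s * t)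
  obtain ⟨m, hm, hm_idem⟩ := exists_coe_omega_eq_pow hidem hpow t
  have hleft := coe_omega_mul_mul_coe_omega hidem hpow lrbg2 s
  apply WithOne.coe_injective
  calc (ω (ω s * t) : WithOne S)
      = ((ω s * t : S) : WithOne S) ^ ((n + 1) * (m + 1)) := by
        rw [hn, pow_succ_mul_succ_of_isIdempotentElem hn_idem]
    _ = ω s * (t : WithOne S) ^ ((m + 1) * (n + 1)) := by
        rw [WithOne.coe_mul, mul_comm (n + 1), mul_pow_of_mul_mul_left_eq hleft _ (by positivity)]
    _ = ((ω s * ω t : S) : WithOne S) := by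
        rw [pow_succ_mul_succ_of_isIdempotentElem hm_idem, ← hm, WithOne.coe_mul]

/-- In a finite LRBG, `((ω s)·t)^ω = (ω s)·(ω t)` for all `s, t`. -/
theorem lrbg_omega_of_omega_mul {S : Type*} [Semigroup S] [Fintype S] (ω : S → S)
    (hidem : ∀ s : S, ω s * ω s = ω s)
    (hpow : ∀ s : S, ∃ n : ℕ, ω s = (fun t => t * s)^[n] s)
    (lrbg1 : ∀ s : S, ω s * s = s)
    (lrbg2 : ∀ s t : S, s * t * ω s = s * t) :
    ∀ s t : S, ω (ω s * t) = ω s * ω t :=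
  lrbg_omega_of_omega_mul_general ω hidem hpow lrbg2
end

section
/- Let S be a finite semigroup that is a strict left regular band of groups, with idempotent-power map ω (so ω(s·t) = (ω s)·(ω t) for all s,t). If s ∈ S and y ∈ S is idempotent with (ω s)·y = y (i.e. s^ω ≤ y), then s·y = y·s. -/
theorem strict_lrbg_commutes_with_larger_idempotent_general {S : Type*} [Semigroup S]
    (ω : S → S)
    (hpow : ∀ s : S, ∃ n : ℕ, ω s = (fun t => t * s)^[n] s)
    (lrbg1 : ∀ s : S, ω s * s = s)
    (lrbg2 : ∀ s t : S, s * t * ω s = s * t)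
    (hstrict : ∀ s t : S, ω (s * t) = ω s * ω t) :
    ∀ s y : S, y * y = y → ω s * y = y → s * y = y * s := by
  intro s y hy hle
  have hωy : ω y = y := by
    obtain ⟨n, hn⟩ := hpow y
    exact hn.trans (Function.iterate_fixed (f := fun t => t * y) hy n)
  have hωsy : ω (s * y) = y := by rw [hstrict, hωy, hle]
  calc s * y = y * (s * y) := by simpa only [hωsy] using (lrbg1 (s * y)).symm
    _ = y * s * ω y := by rw [hωy, mul_assoc]
    _ = y * s := lrbg2 y s

/-- In a finite *strict* LRBG, if `y` is idempotent and
`(ω s)·y = y` (i.e. `s^ω ≤ y`), then `s·y = y·s`. -/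
theorem strict_lrbg_commutes_with_larger_idempotent {S : Type*} [Semigroup S] [Fintype S]
    (ω : S → S)
    (hidem : ∀ s : S, ω s * ω s = ω s)
    (hpow : ∀ s : S, ∃ n : ℕ, ω s = (fun t => t * s)^[n] s)
    (lrbg1 : ∀ s : S, ω s * s = s)
    (lrbg2 : ∀ s t : S, s * t * ω s = s * t)
    (hstrict : ∀ s t : S, ω (s * t) = ω s * ω t) :
    ∀ s y : S, y * y = y → ω s * y = y → s * y = y * s :=
  strict_lrbg_commutes_with_larger_idempotent_general ω hpow lrbg1 lrbg2 hstrict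
end

section
/- Let B be a finite left regular band and (G, Δ) a presheaf of finite groups on B, and let S = Σ_{x ∈ B} G x be endowed with the multiplication ⟨x,s⟩·⟨y,t⟩ := ⟨x·y, (Δ x (x·y) s)·(Δ y (x·y) t)⟩. Then S is a strict left regular band of groups: (a) this multiplication is associative; (b) for each a = ⟨x,s⟩ ∈ S the element ω a := ⟨x, 1_{G x}⟩ is idempotent and equals a^n for some n ≥ 1; (c) (ω a)·a = a for all a ∈ S; (d) a·b·(ω a) = a·b for all a, b ∈ S; and (e) ω(a·b) = (ω a)·(ω b) for all a, b ∈ S. -/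
/-! An element `⟨x, s⟩` of `Σ x, G x` restricts to every index `w` above `x` (`w * x = w`) as
`Δ x w s`, and by functoriality the restriction of a product is the product of the restrictions.
As `Δ x x` is the identity, an element is determined by its index together with its restriction to
that index, so each identity reduces to an equation of indices in `B`, given by the band laws, and
an equation in a single group `G w`. On a fixed index the multiplication is that of `G x`, whence
`⟨x, 1⟩ = ⟨x, s⟩ ^ orderOf s`. -/

class IsLeftRegularBand (B : Type*) [Semigroup B] : Prop where
  mul_self : ∀ x : B, x * x = x
  mul_mul_self : ∀ x y : B, x * y * x = x * y

theorem mul_eq_left_trans {B : Type*} [Semigroup B] {x y z : B} (hxy : y * x = y)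
    (hyz : z * y = z) : z * x = z := by
  rw [← hyz, mul_assoc, hxy]

namespace IsLeftRegularBand

variable {B : Type*} [Semigroup B] [IsLeftRegularBand B]

theorem mul_mul_right (x y : B) : x * y * y = x * y := by
  rw [_root_.mul_assoc, mul_self]

end IsLeftRegularBand

open IsLeftRegularBand

namespace PresheafSigma

variable {B : Type*} [Semigroup B] {G : B → Type*} [∀ x, Group (G x)]
  (Δ : ∀ x y : B, y * x = y → (G x →* G y))

def MapId : Prop :=
  ∀ (x : B) (h : x * x = x), Δ x x h = MonoidHom.id (G x)

def MapComp : Prop :=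
  ∀ (x y z : B) (hxy : y * x = y) (hyz : z * y = z) (hxz : z * x = z),
    (Δ y z hyz).comp (Δ x y hxy) = Δ x z hxz

def res (a : Σ x, G x) (w : B) (h : w * a.1 = w) : G w :=
  Δ a.1 w h a.2

theorem res_self (hid : MapId Δ) (a : Σ x, G x) (h : a.1 * a.1 = a.1) : res Δ a a.1 h = a.2 := by
  rw [res, hid a.1 h]
  rfl

theorem eq_of_res_eq (hid : MapId Δ) {a b : Σ x, G x} (h : a.1 = b.1)
    (hle : b.1 * a.1 = b.1) (hres : res Δ a b.1 hle = b.2) : a = b := by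
  obtain ⟨x, s⟩ := a
  obtain ⟨y, t⟩ := b
  obtain rfl : x = y := h
  rw [res_self Δ hid] at hres
  subst hres
  rfl

variable [IsLeftRegularBand B]

abbrev mul (a b : Σ x, G x) : Σ x, G x :=
  ⟨a.1 * b.1, res Δ a _ (mul_mul_self a.1 b.1) * res Δ b _ (mul_mul_right a.1 b.1)⟩

theorem res_mul (hcomp : MapComp Δ) (a b : Σ x, G x) (w : B) (h : w * (a.1 * b.1) = w) :
    res Δ (mul Δ a b) w h =
      res Δ a w (mul_eq_left_trans (mul_mul_self a.1 b.1) h) *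
        res Δ b w (mul_eq_left_trans (mul_mul_right a.1 b.1) h) := by
  dsimp only [res, mul]
  rw [map_mul, ← MonoidHom.comp_apply, hcomp, ← MonoidHom.comp_apply, hcomp]

theorem mul_assoc (hid : MapId Δ) (hcomp : MapComp Δ) (a b c : Σ x, G x) :
    mul Δ (mul Δ a b) c = mul Δ a (mul Δ b c) := by
  refine eq_of_res_eq Δ hid (_root_.mul_assoc a.1 b.1 c.1)
    (by dsimp only [mul]; rw [_root_.mul_assoc a.1 b.1 c.1, mul_self]) ?_
  change _ = res Δ a _ _ * res Δ (mul Δ b c) _ _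
  rw [res_mul Δ hcomp, res_mul Δ hcomp, res_mul Δ hcomp, _root_.mul_assoc]

theorem mul_mk_mk_same (hid : MapId Δ) (x : B) (s t : G x) :
    mul Δ ⟨x, s⟩ ⟨x, t⟩ = ⟨x, s * t⟩ :=
  (eq_of_res_eq Δ hid (mul_self x).symm (mul_mul_self x x) (map_mul _ s t)).symm

theorem iterate_mul_right_mk (hid : MapId Δ) (x : B) (s : G x) (n : ℕ) :
    (fun b => mul Δ b ⟨x, s⟩)^[n] ⟨x, s⟩ = ⟨x, s ^ (n + 1)⟩ := by
  induction n with
  | zero => rw [Function.iterate_zero_apply, zero_add, pow_one]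
  | succ n ih => rw [Function.iterate_succ_apply', ih, mul_mk_mk_same Δ hid, ← pow_succ]

theorem exists_iterate_mul_right_eq_mk_one [∀ x, Finite (G x)] (hid : MapId Δ)
    (a : Σ x, G x) :
    ∃ n : ℕ, (⟨a.1, 1⟩ : Σ x, G x) = (fun b => mul Δ b a)^[n] a := by
  obtain ⟨x, s⟩ := a
  refine ⟨orderOf s - 1, ?_⟩
  rw [iterate_mul_right_mk Δ hid, Nat.sub_add_cancel (orderOf_pos s), pow_orderOf_eq_one]

theorem mul_mul_mk_one (hid : MapId Δ) (a b : Σ x, G x) :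
    mul Δ (mul Δ a b) ⟨a.1, 1⟩ = mul Δ a b := by
  refine (eq_of_res_eq Δ hid (mul_mul_self a.1 b.1).symm
    (mul_mul_self (a.1 * b.1) a.1) ?_).symm
  change _ = res Δ (mul Δ a b) _ _ * Δ a.1 _ _ 1
  rw [map_one, _root_.mul_one]

theorem mk_one_fst_mul (a b : Σ x, G x) :
    (⟨(mul Δ a b).1, 1⟩ : Σ x, G x) = mul Δ ⟨a.1, 1⟩ ⟨b.1, 1⟩ := by
  change _ = (⟨a.1 * b.1, Δ a.1 _ _ 1 * Δ b.1 _ _ 1⟩ : Σ x, G x)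
  rw [map_one, map_one, _root_.mul_one]

end PresheafSigma

/-- Given a presheaf of finite groups `(G, Δ)` on a finite left regular
band `B`, the sigma type `S = Σ x, G x` with the multiplication
`⟨x,s⟩·⟨y,t⟩ = ⟨x·y, Δ x (x·y) s · Δ y (x·y) t⟩` is a strict left regular band of groups,
with idempotent-power map `ω⟨x,s⟩ = ⟨x, 1⟩`. -/
theorem presheaf_of_groups_gives_strict_lrbg {B : Type*} [Semigroup B]
    (lrb1 : ∀ x : B, x * x = x)
    (lrb2 : ∀ x y : B, x * y * x = x * y)
    (G : B → Type*) [∀ x, Group (G x)] [∀ x, Fintype (G x)]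
    (Δ : ∀ x y : B, y * x = y → (G x →* G y))
    (Δid : ∀ (x : B) (h : x * x = x), Δ x x h = MonoidHom.id (G x))
    (Δcomp : ∀ (x y z : B) (hxy : y * x = y) (hyz : z * y = z) (hxz : z * x = z),
      (Δ y z hyz).comp (Δ x y hxy) = Δ x z hxz)
    (m : (Σ x : B, G x) → (Σ x : B, G x) → (Σ x : B, G x))
    (hm : ∀ (x y : B) (s : G x) (t : G y),
      m ⟨x, s⟩ ⟨y, t⟩ =
        ⟨x * y, Δ x (x * y) (lrb2 x y) s *
                Δ y (x * y) (by rw [mul_assoc, lrb1 y]) t⟩)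
    (om : (Σ x : B, G x) → (Σ x : B, G x))
    (hom : ∀ (x : B) (s : G x), om ⟨x, s⟩ = ⟨x, 1⟩) :
    (∀ a b c : Σ x : B, G x, m (m a b) c = m a (m b c)) ∧
    (∀ a : Σ x : B, G x, m (om a) (om a) = om a) ∧
    (∀ a : Σ x : B, G x, ∃ n : ℕ, om a = (fun b => m b a)^[n] a) ∧
    (∀ a : Σ x : B, G x, m (om a) a = a) ∧
    (∀ a b : Σ x : B, G x, m (m a b) (om a) = m a b) ∧
    (∀ a b : Σ x : B, G x, om (m a b) = m (om a) (om b)) := by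
  have : IsLeftRegularBand B := ⟨lrb1, lrb2⟩
  obtain rfl : m = PresheafSigma.mul Δ := funext₂ fun ⟨x, s⟩ ⟨y, t⟩ => hm x y s t
  obtain rfl : om = fun a => ⟨a.1, 1⟩ := funext fun ⟨x, s⟩ => hom x s
  refine ⟨PresheafSigma.mul_assoc Δ Δid Δcomp, fun ⟨x, _⟩ => ?_,
    PresheafSigma.exists_iterate_mul_right_eq_mk_one Δ Δid, fun ⟨x, s⟩ => ?_,
    PresheafSigma.mul_mul_mk_one Δ Δid, PresheafSigma.mk_one_fst_mul Δ⟩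
  · rw [PresheafSigma.mul_mk_mk_same Δ Δid, one_mul]
  · rw [PresheafSigma.mul_mk_mk_same Δ Δid, one_mul]
end

section
/- Let S be a finite semigroup that is a strict left regular band of groups, with idempotent-power map ω (so ω(s·t) = (ω s)·(ω t) for all s,t). Then for all s, t ∈ S, s·t = ((ω s)·(ω t)·s)·((ω s)·(ω t)·t). (This is the identity showing that every strict LRBG is recovered from the presheaf of its maximal subgroups over its band of idempotents, via the transition morphisms given by left multiplication.) -/
section LeftRegularBandOfGroups

variable {S : Type*} [Semigroup S] (ω : S → S)

theorem omega_eq_self_of_mul_self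
    (hpow : ∀ s : S, ∃ n : ℕ, ω s = (fun t => t * s)^[n] s) {x : S} (hx : x * x = x) :
    ω x = x := by
  obtain ⟨n, hn⟩ := hpow x
  exact hn.trans (Function.iterate_fixed (f := fun t => t * x) hx n)

theorem omega_omega_mul_omega
    (hidem : ∀ s : S, ω s * ω s = ω s)
    (hpow : ∀ s : S, ∃ n : ℕ, ω s = (fun t => t * s)^[n] s)
    (hstrict : ∀ s t : S, ω (s * t) = ω s * ω t) (s t : S) :
    ω (ω s * ω t) = ω s * ω t := by
  rw [hstrict, omega_eq_self_of_mul_self ω hpow (hidem s),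
    omega_eq_self_of_mul_self ω hpow (hidem t)]

end LeftRegularBandOfGroups

theorem strict_lrbg_product_via_presheaf_general {S : Type*} [Semigroup S]
    (ω : S → S)
    (hidem : ∀ s : S, ω s * ω s = ω s)
    (hpow : ∀ s : S, ∃ n : ℕ, ω s = (fun t => t * s)^[n] s)
    (lrbg1 : ∀ s : S, ω s * s = s)
    (lrbg2 : ∀ s t : S, s * t * ω s = s * t)
    (hstrict : ∀ s t : S, ω (s * t) = ω s * ω t) :
    ∀ s t : S, s * t = (ω s * ω t * s) * (ω s * ω t * t) := by
  intro s t
  set e := ω s * ω t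
  have he_absorbs : e * s * e = e * s := by
    have hωe : ω e = e := omega_omega_mul_omega ω hidem hpow hstrict s t
    simpa only [hωe] using lrbg2 e s
  have he_left_unit : e * (s * t) = s * t := by
    simpa only [hstrict] using lrbg1 (s * t)
  calc s * t = e * s * t := by rw [mul_assoc, he_left_unit]
    _ = e * s * e * t := by rw [he_absorbs]
    _ = (e * s) * (e * t) := by rw [mul_assoc]

/-- In a finite *strict* LRBG,
`s·t = ((ω s)·(ω t)·s)·((ω s)·(ω t)·t)` for all `s, t`; this identity recovers the
semigroup from the presheaf of its maximal subgroups over its band of idempotents. -/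
theorem strict_lrbg_product_via_presheaf {S : Type*} [Semigroup S] [Fintype S]
    (ω : S → S)
    (hidem : ∀ s : S, ω s * ω s = ω s)
    (hpow : ∀ s : S, ∃ n : ℕ, ω s = (fun t => t * s)^[n] s)
    (lrbg1 : ∀ s : S, ω s * s = s)
    (lrbg2 : ∀ s t : S, s * t * ω s = s * t)
    (hstrict : ∀ s t : S, ω (s * t) = ω s * ω t) :
    ∀ s t : S, s * t = (ω s * ω t * s) * (ω s * ω t * t) :=
  strict_lrbg_product_via_presheaf_general ω hidem hpow lrbg1 lrbg2 hstrict
end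

section
/- With the hypotheses of the stated context (finite monoid S which is an LRBG, elements e_y ∈ ℂ[S] for idempotent y that are constant on ∼-classes and satisfy Saliola's property, R_t := H_t·e_{ω t}, and coefficients c : S → ℂ with Σ_{x idempotent} c(x)·R_x = 1 in ℂ[S]), one has for every s ∈ S: H_s = Σ over idempotents x ∈ S with (ω s)·x ∼ x of c(x)·R_{s·x}. Consequently the family {R_s}_{s ∈ S} spans ℂ[S] and hence is a ℂ-basis of ℂ[S]. -/
open scoped Classical

/-- For a finite monoid `S` which is an LRBG, with `e_y` as in the
context, `R_t := H_t · e_{ω t}`, and coefficients `c : S → ℂ` with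
`Σ_{x idempotent} c x • R_x = 1`, one has
`H_s = Σ_{x idempotent, (ω s)·x ∼ x} c x • R_{s·x}` for every `s`; consequently the
family `{R_s}` spans `ℂ[S]` and hence is a `ℂ`-basis of `ℂ[S]`. -/
theorem lrbg_R_basis {S : Type*} [Monoid S] [Fintype S] (ω : S → S)
    (hidem : ∀ s : S, ω s * ω s = ω s)
    (hpow : ∀ s : S, ∃ n : ℕ, ω s = (fun t => t * s)^[n] s)
    (lrbg1 : ∀ s : S, ω s * s = s)
    (lrbg2 : ∀ s t : S, s * t * ω s = s * t)
    (e : S → MonoidAlgebra ℂ S)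
    (heconst : ∀ y y' : S, y * y = y → y' * y' = y' → LRBGsim ω y y' → e y = e y')
    (hsaliola : ∀ x y : S, x * x = x → y * y = y → ¬ LRBGsim ω (x * y) y →
      (MonoidAlgebra.single x 1 : MonoidAlgebra ℂ S) * e y = 0)
    (c : S → ℂ)
    (hc : ∑ x ∈ Finset.univ.filter (fun x : S => x * x = x),
        c x • ((MonoidAlgebra.single x 1 : MonoidAlgebra ℂ S) * e (ω x)) = 1) :
    (∀ s : S,
      (MonoidAlgebra.single s 1 : MonoidAlgebra ℂ S) =
        ∑ x ∈ Finset.univ.filter (fun x : S => x * x = x ∧ LRBGsim ω (ω s * x) x),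
          c x • (MonoidAlgebra.single (s * x) 1 * e (ω (s * x)))) ∧
    Submodule.span ℂ
        (Set.range fun s : S =>
          (MonoidAlgebra.single s 1 : MonoidAlgebra ℂ S) * e (ω s)) = ⊤ ∧
    ∃ b : Module.Basis S ℂ (MonoidAlgebra ℂ S),
      ∀ s : S, b s = (MonoidAlgebra.single s 1 : MonoidAlgebra ℂ S) * e (ω s) := by
  classical
  -- `ω s` is a positive power of `s`
  have hiter : ∀ (s : S) (n : ℕ), (fun t => t * s)^[n] s = s ^ (n + 1) := by
    intro s n
    induction n with
    | zero => simp
    | succ k ih =>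
      rw [Function.iterate_succ_apply', ih]
      exact (pow_succ s (k + 1)).symm
  have hpow' : ∀ s : S, ∃ m : ℕ, 1 ≤ m ∧ ω s = s ^ m := by
    intro s
    obtain ⟨n, hn⟩ := hpow s
    exact ⟨n + 1, Nat.le_add_left 1 n, by rw [hn, hiter]⟩
  -- idempotents are fixed by ω
  have hωidem : ∀ x : S, x * x = x → ω x = x := by
    intro x hx
    obtain ⟨m, hm1, hm⟩ := hpow' x
    rw [hm]
    clear hm
    induction m with
    | zero => omega
    | succ k ih =>
      rcases Nat.eq_zero_or_pos k with hk | hk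
      · simp [hk]
      · rw [pow_succ, ih hk, hx]
  have hsω : ∀ s : S, s * ω s = s := by
    intro s; have := lrbg2 s 1; simpa using this
  have hxtx : ∀ x : S, x * x = x → ∀ t : S, x * t * x = x * t := by
    intro x hx t
    have := lrbg2 x t
    rwa [hωidem x hx] at this
  -- `ω s * x` is idempotent for idempotent `x`
  have hωsx : ∀ s x : S, x * x = x → (ω s * x) * (ω s * x) = ω s * x := by
    intro s x hx
    have h1 : ω s * x * ω s = ω s * x := by
      have := lrbg2 (ω s) x
      rwa [hωidem (ω s) (hidem s)] at this
    calc (ω s * x) * (ω s * x) = (ω s * x * ω s) * x := by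
          rw [mul_assoc (ω s * x), ← mul_assoc (ω s * x)]
      _ = ω s * x * x := by rw [h1]
      _ = ω s * x := by rw [mul_assoc, hx]
  -- vanishing lemma
  have hvanish : ∀ s x : S, x * x = x → ¬ LRBGsim ω (ω s * x) x →
      (MonoidAlgebra.single (s * x) 1 : MonoidAlgebra ℂ S) * e x = 0 := by
    intro s x hx hnsim
    have hz : (MonoidAlgebra.single (ω s * x) 1 : MonoidAlgebra ℂ S) * e x = 0 := by
      apply hsaliola _ _ (hωsx s x hx) hx
      rwa [mul_assoc, hx]
    have hfac : (MonoidAlgebra.single (s * x) 1 : MonoidAlgebra ℂ S) =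
        MonoidAlgebra.single s 1 * MonoidAlgebra.single (ω s * x) 1 := by
      rw [MonoidAlgebra.single_mul_single, one_mul, ← mul_assoc, hsω]
    rw [hfac, mul_assoc, hz, mul_zero]
  -- matching lemma
  have hmatch : ∀ s x : S, x * x = x → LRBGsim ω (ω s * x) x → e (ω (s * x)) = e x := by
    intro s x hx hsim
    have hxωs : x * ω s = x := by
      have h2 := hsim.2
      rw [hωidem x hx, ← mul_assoc] at h2
      rwa [hxtx x hx (ω s)] at h2
    obtain ⟨m, hm1, hm⟩ := hpow' (s * x)
    obtain ⟨n, hn1, hn⟩ := hpow' s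
    -- collapse lemma
    have hcol : ∀ j : ℕ, x * (s * x) ^ j = x * s ^ j := by
      intro j
      induction j with
      | zero => simp
      | succ k ih =>
        calc x * (s * x) ^ (k + 1) = x * (s * x) ^ k * (s * x) := by
              rw [pow_succ, mul_assoc]
          _ = x * s ^ k * (s * x) := by rw [ih]
          _ = x * (s ^ k * s) * x := by rw [← mul_assoc, mul_assoc x (s ^ k) s]
          _ = x * (s ^ k * s) := hxtx x hx _
          _ = x * s ^ (k + 1) := by rw [pow_succ]
    have hxsn : x * s ^ n = x := by rw [← hn, hxωs]
    -- x * s ^ (m+1) = x * s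
    have hstep : x * s ^ (m + 1) = x * s := by
      have h1 : (s * x) ^ (m + 1) = s * x := by
        rw [pow_succ, ← hm, lrbg1]
      have h2 : x * (s * x) ^ (m + 1) = x * (s * x) := congrArg (fun t => x * t) h1
      rw [hcol (m + 1)] at h2
      have h3 : x * (s * x) = x * s := by
        have := hcol 1; simpa using this
      rw [h3] at h2
      exact h2
    have hxsm : x * s ^ m = x := by
      have ha : x * s ^ (m + n) = x * s ^ m := by
        rw [add_comm m n, pow_add, ← mul_assoc, hxsn]
      have hb : x * s ^ (m + n) = x := by
        obtain ⟨n', rfl⟩ : ∃ n', n = n' + 1 := ⟨n - 1, by omega⟩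
        calc x * s ^ (m + (n' + 1)) = x * s ^ (m + 1) * s ^ n' := by
              rw [show m + (n' + 1) = (m + 1) + n' by omega, pow_add, ← mul_assoc]
          _ = x * s * s ^ n' := by rw [hstep]
          _ = x * s ^ (n' + 1) := by rw [mul_assoc, ← pow_succ']
          _ = x := hxsn
      rw [← ha, hb]
    have hsim1 : ω (s * x) * x = ω (s * x) := by
      obtain ⟨m', rfl⟩ : ∃ m', m = m' + 1 := ⟨m - 1, by omega⟩
      rw [hm, pow_succ, mul_assoc, mul_assoc, hx]
    have hsim2 : x * ω (s * x) = x := by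
      rw [hm, hcol m, hxsm]
    refine heconst _ _ (hidem (s * x)) hx ?_
    constructor
    · rw [hωidem (ω (s * x)) (hidem (s * x))]; exact hsim1
    · rw [hωidem x hx]; exact hsim2
  -- main identity
  have hmain : ∀ s : S,
      (MonoidAlgebra.single s 1 : MonoidAlgebra ℂ S) =
        ∑ x ∈ Finset.univ.filter (fun x : S => x * x = x ∧ LRBGsim ω (ω s * x) x),
          c x • (MonoidAlgebra.single (s * x) 1 * e (ω (s * x))) := by
    intro s
    have h0 : (MonoidAlgebra.single s 1 : MonoidAlgebra ℂ S) =
        ∑ x ∈ Finset.univ.filter (fun x : S => x * x = x),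
          c x • (MonoidAlgebra.single (s * x) 1 * e x) := by
      conv_lhs => rw [← mul_one (MonoidAlgebra.single s 1 : MonoidAlgebra ℂ S), ← hc]
      rw [Finset.mul_sum]
      refine Finset.sum_congr rfl ?_
      intro x hx
      rw [Finset.mem_filter] at hx
      rw [mul_smul_comm, ← mul_assoc, MonoidAlgebra.single_mul_single, mul_one,
        hωidem x hx.2]
    have hsub : Finset.univ.filter (fun x : S => x * x = x ∧ LRBGsim ω (ω s * x) x) ⊆
        Finset.univ.filter (fun x : S => x * x = x) := by
      intro x hx
      rw [Finset.mem_filter] at hx ⊢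
      exact ⟨hx.1, hx.2.1⟩
    have hzero : ∀ x ∈ Finset.univ.filter (fun x : S => x * x = x),
        x ∉ Finset.univ.filter (fun x : S => x * x = x ∧ LRBGsim ω (ω s * x) x) →
        c x • (MonoidAlgebra.single (s * x) 1 * e x) = 0 := by
      intro x hx hnx
      rw [Finset.mem_filter] at hx hnx
      have hnsim : ¬ LRBGsim ω (ω s * x) x := by
        intro hsim
        exact hnx ⟨Finset.mem_univ x, hx.2, hsim⟩
      rw [hvanish s x hx.2 hnsim, smul_zero]
    rw [h0, ← Finset.sum_subset hsub hzero]
    refine Finset.sum_congr rfl ?_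
    intro x hx
    rw [Finset.mem_filter] at hx
    rw [hmatch s x hx.2.1 hx.2.2]
  -- spanning
  have hsingle_mem : ∀ s : S, (MonoidAlgebra.single s 1 : MonoidAlgebra ℂ S) ∈
      Submodule.span ℂ (Set.range fun t : S =>
        (MonoidAlgebra.single t 1 : MonoidAlgebra ℂ S) * e (ω t)) := by
    intro s
    rw [hmain s]
    exact Submodule.sum_mem _ fun x _ =>
      Submodule.smul_mem _ _ (Submodule.subset_span ⟨s * x, rfl⟩)
  have hspan : Submodule.span ℂ (Set.range fun t : S =>
      (MonoidAlgebra.single t 1 : MonoidAlgebra ℂ S) * e (ω t)) = ⊤ := by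
    rw [eq_top_iff]
    intro a _
    have hrepr : a = ∑ t ∈ a.coeff.support, (a.coeff t) • (MonoidAlgebra.single t 1 : MonoidAlgebra ℂ S) := by
      conv_lhs => rw [← MonoidAlgebra.sum_coeff_single a]
      rw [Finsupp.sum]
      refine Finset.sum_congr rfl fun t _ => ?_
      rw [MonoidAlgebra.smul_single', mul_one]
    rw [hrepr]
    exact Submodule.sum_mem _ fun t _ => Submodule.smul_mem _ _ (hsingle_mem t)
  -- basis
  refine ⟨hmain, hspan, ?_⟩
  have bS : Module.Basis S ℂ (MonoidAlgebra ℂ S) := MonoidAlgebra.basis S ℂ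
  have hcard : Fintype.card S = Module.finrank ℂ (MonoidAlgebra ℂ S) :=
    (Module.finrank_eq_card_basis bS).symm
  refine ⟨basisOfTopLeSpanOfCardEqFinrank _ hspan.ge hcard, fun s => ?_⟩
  rw [coe_basisOfTopLeSpanOfCardEqFinrank]
end

section
/- With the hypotheses of the stated context (finite monoid S which is an LRBG; support lattice L with quotient map σ; homogeneous section (c, u) of the support map; Saliola idempotents e : L → ℂ[S] satisfying the recursion; and, for each ℓ ∈ L, a complete system of primitive orthogonal idempotents (E ℓ i)_{i ∈ I ℓ} of the group algebra ℂ[G_{x_ℓ}]), the family of elements e_{(ℓ,i)} := (e ℓ)·(E ℓ i)·(e ℓ), for ℓ ∈ L and i ∈ I ℓ, is a complete system of primitive orthogonal idempotents of ℂ[S]: each e_{(ℓ,i)} is idempotent; e_{(ℓ,i)}·e_{(ℓ',i')} = 0 whenever (ℓ,i) ≠ (ℓ',i'); Σ_{ℓ ∈ L} Σ_{i ∈ I ℓ} e_{(ℓ,i)} = 1; and each e_{(ℓ,i)} is primitive in ℂ[S], i.e. nonzero and not expressible as e₁ + e₂ with e₁, e₂ nonzero idempotents of ℂ[S] satisfying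 e₁·e₂ = e₂·e₁ = 0. -/
open scoped Classical

set_option linter.unusedSectionVars false
set_option linter.unusedVariables false
set_option maxHeartbeats 1000000
open Finset

set_option linter.unusedSectionVars false
set_option maxHeartbeats 1000000
open scoped Classical
open Finset

namespace LRBG19

variable {S : Type*} [Monoid S] {L : Type*}

section Semigroup
variable {ω : S → S}

theorem pow_rep (hpow : ∀ s : S, ∃ n : ℕ, ω s = (fun t => t * s)^[n] s) (s : S) :
    ∃ n : ℕ, ω s = s ^ (n+1) := by
  obtain ⟨n, hn⟩ := hpow s
  refine ⟨n, hn.trans ?_⟩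
  clear hn
  induction n with
  | zero => simp
  | succ k ih =>
    rw [Function.iterate_succ_apply', ih]
    exact (pow_succ s (k+1)).symm

theorem om_absorb (hpow : ∀ s : S, ∃ n : ℕ, ω s = (fun t => t * s)^[n] s)
    {z y : S} (h : z * y = z) : ω z * y = ω z := by
  obtain ⟨n, hn⟩ := pow_rep hpow z
  rw [hn, pow_succ, mul_assoc, h]

theorem om_absorb_left (hpow : ∀ s : S, ∃ n : ℕ, ω s = (fun t => t * s)^[n] s)
    {z y : S} (h : y * z = z) : y * ω z = ω z := by
  obtain ⟨n, hn⟩ := pow_rep hpow z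
  rw [hn]
  clear hn
  induction n with
  | zero => simpa using h
  | succ k ih => rw [pow_succ, ← mul_assoc, ih]

theorem om_eq (hpow : ∀ s : S, ∃ n : ℕ, ω s = (fun t => t * s)^[n] s)
    (lrbg1 : ∀ s : S, ω s * s = s)
    {z y w : S} (h1 : z * y = z) (h2 : z * w = y) : ω z = y := by
  have ha : ω z * y = ω z := om_absorb hpow h1
  have hb : ω z * y = y := by
    calc ω z * y = ω z * (z * w) := by rw [h2]
    _ = (ω z * z) * w := by rw [mul_assoc]
    _ = z * w := by rw [lrbg1]
    _ = y := h2
  rw [← ha, hb]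

theorem idem_om (hpow : ∀ s : S, ∃ n : ℕ, ω s = (fun t => t * s)^[n] s)
    (lrbg1 : ∀ s : S, ω s * s = s) {x : S} (hx : x * x = x) : ω x = x :=
  om_eq hpow lrbg1 hx hx

theorem s_om (lrbg2 : ∀ s t : S, s * t * ω s = s * t) (s : S) : s * ω s = s := by
  have := lrbg2 s 1
  simpa using this

theorem absorb (lrbg2 : ∀ s t : S, s * t * ω s = s * t)
    {s x : S} (h : ω s * x = ω s) : s * x = s := by
  calc s * x = (s * ω s) * x := by rw [s_om lrbg2 s]
  _ = s * (ω s * x) := by rw [mul_assoc]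
  _ = s * ω s := by rw [h]
  _ = s := s_om lrbg2 s

theorem inv_ex (hpow : ∀ s : S, ∃ n : ℕ, ω s = (fun t => t * s)^[n] s) (z : S) :
    ∃ w : S, z * w = ω z ∧ w * z = ω z := by
  obtain ⟨n, hn⟩ := pow_rep hpow z
  exact ⟨z ^ n, by rw [hn, pow_succ'], by rw [hn, pow_succ]⟩

theorem om_mul_left (hpow : ∀ s : S, ∃ n : ℕ, ω s = (fun t => t * s)^[n] s)
    (lrbg2 : ∀ s t : S, s * t * ω s = s * t) (s t : S) :
    ω (s * t) * ω s = ω (s * t) :=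
  om_absorb hpow (lrbg2 s t)

theorem om_mul_right (hpow : ∀ s : S, ∃ n : ℕ, ω s = (fun t => t * s)^[n] s)
    (lrbg2 : ∀ s t : S, s * t * ω s = s * t) (s t : S) :
    ω (s * t) * ω t = ω (s * t) := by
  refine om_absorb hpow ?_
  rw [mul_assoc, s_om lrbg2 t]

/-- M3: if `ω t` absorbs `ω h` then `ω (t*h) = ω t`. -/
theorem om_mul_eq (hpow : ∀ s : S, ∃ n : ℕ, ω s = (fun t => t * s)^[n] s)
    (lrbg1 : ∀ s : S, ω s * s = s) (lrbg2 : ∀ s t : S, s * t * ω s = s * t)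
    {t h : S} (hth : ω t * ω h = ω t) : ω (t * h) = ω t := by
  obtain ⟨wh, hwh1, hwh2⟩ := inv_ex hpow h
  obtain ⟨wt, hwt1, hwt2⟩ := inv_ex hpow t
  refine om_eq hpow lrbg1 (w := wh * wt) (lrbg2 t h) ?_
  have h1 : t * h * wh = t := by
    rw [mul_assoc, hwh1]
    exact absorb lrbg2 hth
  calc t * h * (wh * wt) = (t * h * wh) * wt := by rw [← mul_assoc]
  _ = t * wt := by rw [h1]
  _ = ω t := hwt1

/-- M4: product of idempotents is idempotent. -/
theorem idem_mul (hpow : ∀ s : S, ∃ n : ℕ, ω s = (fun t => t * s)^[n] s)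
    (lrbg1 : ∀ s : S, ω s * s = s) (lrbg2 : ∀ s t : S, s * t * ω s = s * t)
    {x y : S} (hx : x * x = x) (hy : y * y = y) : (x * y) * (x * y) = x * y := by
  have hxyx : x * y * x = x * y := by
    have := lrbg2 x y
    rwa [idem_om hpow lrbg1 hx] at this
  calc (x * y) * (x * y) = ((x * y) * x) * y := by rw [mul_assoc, mul_assoc, mul_assoc]
  _ = (x * y) * y := by rw [hxyx]
  _ = x * (y * y) := by rw [mul_assoc]
  _ = x * y := by rw [hy]

end Semigroup

noncomputable abbrev Hs {S : Type*} [Monoid S] (s : S) : MonoidAlgebra ℂ S :=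
  MonoidAlgebra.single s 1

/-- All the data and hypotheses of the LRBG setting. -/
structure Setup (S : Type*) (L : Type*) [Monoid S] [Fintype S] [Fintype L] where
  ω : S → S
  σ : S → L
  xl : L → S
  c : S → ℂ
  u : L → MonoidAlgebra ℂ S
  e : L → MonoidAlgebra ℂ S
  hidem : ∀ s : S, ω s * ω s = ω s
  hpow : ∀ s : S, ∃ n : ℕ, ω s = (fun t => t * s)^[n] s
  lrbg1 : ∀ s : S, ω s * s = s
  lrbg2 : ∀ s t : S, s * t * ω s = s * t
  hσ : ∀ x y : S, x * x = x → y * y = y →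
      (σ x = σ y ↔ (ω x * y = x ∧ ω y * x = y))
  hxl : ∀ ℓ : L, xl ℓ * xl ℓ = xl ℓ ∧ σ (xl ℓ) = ℓ
  hu : ∀ ℓ : L, u ℓ = ∑ x ∈ Finset.univ.filter (fun x : S => x * x = x ∧ σ x = ℓ),
      c x • (MonoidAlgebra.single x 1 : MonoidAlgebra ℂ S)
  hc : ∀ ℓ : L, ∑ x ∈ Finset.univ.filter (fun x : S => x * x = x ∧ σ x = ℓ), c x = 1
  he : ∀ ℓ : L, e ℓ = u ℓ - ∑ ℓ' ∈ Finset.univ.filter (fun ℓ' : L =>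
      ℓ ≠ ℓ' ∧ ∃ x y : S, x * x = x ∧ y * y = y ∧ σ x = ℓ ∧ σ y = ℓ' ∧
        ω (x * y) * y = x * y ∧ ω y * (x * y) = y),
      u ℓ * e ℓ'

variable {S : Type*} {L : Type*} [Monoid S] [Fintype S] [Fintype L]

namespace Setup

variable (C : Setup S L)

/-- the partial order on `L` -/
def leL (a b : L) : Prop := C.xl b * C.xl a = C.xl b

noncomputable def suppS (s : S) : L := C.σ (C.ω s)

noncomputable abbrev idxF (ℓ : L) : Finset L :=
  Finset.univ.filter (fun ℓ' : L =>
      ℓ ≠ ℓ' ∧ ∃ x y : S, x * x = x ∧ y * y = y ∧ C.σ x = ℓ ∧ C.σ y = ℓ' ∧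
        C.ω (x * y) * y = x * y ∧ C.ω y * (x * y) = y)

theorem he' (ℓ : L) : C.e ℓ = C.u ℓ - ∑ ℓ' ∈ C.idxF ℓ, C.u ℓ * C.e ℓ' := C.he ℓ

theorem idem_om' {x : S} (hx : x * x = x) : C.ω x = x := idem_om C.hpow C.lrbg1 hx

/-- M5 -/
theorem sim_mul {x z : S} (hx : x * x = x) (hz : z * z = z) (h : C.σ x = C.σ z) :
    x * z = x := by
  have := ((C.hσ x z hx hz).mp h).1
  rwa [C.idem_om' hx] at this

/-- M6 -/
theorem transfer_right {y x x' : S} (hx : x * x = x) (hx' : x' * x' = x')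
    (hσσ : C.σ x = C.σ x') (h : y * x = y) : y * x' = y := by
  calc y * x' = (y * x) * x' := by rw [h]
  _ = y * (x * x') := by rw [mul_assoc]
  _ = y * x := by rw [C.sim_mul hx hx' hσσ]
  _ = y := h

/-- M7 -/
theorem transfer_left {y y' x : S} (hy : y * y = y) (hy' : y' * y' = y')
    (hσσ : C.σ y = C.σ y') (h : y * x = y) : y' * x = y' := by
  have hyy : y' * y = y' := C.sim_mul hy' hy hσσ.symm
  calc y' * x = (y' * y) * x := by rw [hyy]
  _ = y' * (y * x) := by rw [mul_assoc]
  _ = y' * y := by rw [h]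
  _ = y' := hyy

theorem leL_refl (a : L) : C.leL a a := (C.hxl a).1

theorem leL_trans {a b d : L} (h1 : C.leL a b) (h2 : C.leL b d) : C.leL a d := by
  show C.xl d * C.xl a = C.xl d
  calc C.xl d * C.xl a = (C.xl d * C.xl b) * C.xl a := by rw [h2]
  _ = C.xl d * (C.xl b * C.xl a) := by rw [mul_assoc]
  _ = C.xl d * C.xl b := by rw [h1]
  _ = C.xl d := h2

theorem leL_antisymm {a b : L} (h1 : C.leL a b) (h2 : C.leL b a) : a = b := by
  have hxa := (C.hxl a).1
  have hxb := (C.hxl b).1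
  have : C.σ (C.xl a) = C.σ (C.xl b) := by
    refine (C.hσ _ _ hxa hxb).mpr ?_
    rw [C.idem_om' hxa, C.idem_om' hxb]
    exact ⟨h2, h1⟩
  rw [(C.hxl a).2, (C.hxl b).2] at this
  exact this

theorem bridge {y : S} (hy : y * y = y) (a : L) :
    C.leL a (C.σ y) ↔ y * C.xl a = y := by
  have hxy := (C.hxl (C.σ y)).1
  have hxa := (C.hxl a).1
  have hσσ : C.σ (C.xl (C.σ y)) = C.σ y := (C.hxl (C.σ y)).2
  constructor
  · intro h
    exact C.transfer_left hxy hy hσσ h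
  · intro h
    exact C.transfer_left hy hxy hσσ.symm h

theorem bridge' {s : S} (a : L) :
    C.leL a (C.suppS s) ↔ C.ω s * C.xl a = C.ω s :=
  C.bridge (C.hidem s) a

theorem supp_idem {x : S} (hx : x * x = x) : C.suppS x = C.σ x := by
  unfold suppS; rw [C.idem_om' hx]

theorem supp_xl (a : L) : C.suppS (C.xl a) = a := by
  rw [C.supp_idem (C.hxl a).1, (C.hxl a).2]

/-- absorption: if `supp s ⊒ m` and `x` is an idempotent with `σ x = m` then `s * x = s`. -/
theorem absorb_of_le {s x : S} {m : L} (hle : C.leL m (C.suppS s))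
    (hx : x * x = x) (hσx : C.σ x = m) : s * x = s := by
  have h1 : C.ω s * C.xl m = C.ω s := (C.bridge' m).mp hle
  have h2 : C.ω s * x = C.ω s :=
    C.transfer_right (C.hxl m).1 hx ((C.hxl m).2.trans hσx.symm) h1
  exact absorb C.lrbg2 h2

theorem supp_mono (s t : S) : C.leL (C.suppS s) (C.suppS (s * t)) := by
  rw [bridge']
  have h1 : C.ω (s * t) * C.ω s = C.ω (s * t) := om_mul_left C.hpow C.lrbg2 s t
  exact C.transfer_right (C.hidem s) (C.hxl (C.suppS s)).1
    (((C.hxl (C.suppS s)).2).symm) h1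

theorem supp_mono_right (s t : S) : C.leL (C.suppS t) (C.suppS (s * t)) := by
  rw [bridge']
  have h1 : C.ω (s * t) * C.ω t = C.ω (s * t) := om_mul_right C.hpow C.lrbg2 s t
  exact C.transfer_right (C.hidem t) (C.hxl (C.suppS t)).1
    (((C.hxl (C.suppS t)).2).symm) h1

theorem supp_mul_group {t h : S} (hle : C.leL (C.suppS h) (C.suppS t)) :
    C.suppS (t * h) = C.suppS t := by
  have h1 : C.ω t * C.xl (C.suppS h) = C.ω t := (C.bridge' _).mp hle
  have h2 : C.ω t * C.ω h = C.ω t :=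
    C.transfer_right (C.hxl (C.suppS h)).1 (C.hidem h)
      ((C.hxl (C.suppS h)).2) h1
  unfold suppS
  rw [om_mul_eq C.hpow C.lrbg1 C.lrbg2 h2]

theorem mem_idxF {ℓ ℓ' : L} : ℓ' ∈ C.idxF ℓ ↔ (C.leL ℓ ℓ' ∧ ℓ ≠ ℓ') := by
  rw [Finset.mem_filter]
  simp only [Finset.mem_univ, true_and]
  constructor
  · rintro ⟨hne, x, y, hx, hy, hσx, hσy, h1, h2⟩
    refine ⟨?_, hne⟩
    set z := x * y with hzdef
    have hzy : z * y = z := by rw [hzdef, mul_assoc, hy]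
    have hωzy : C.ω z * y = C.ω z := om_absorb C.hpow hzy
    have hωz : C.ω z = z := hωzy.symm.trans h1
    have hyz : y * z = y := by
      calc y * z = (C.ω y) * z := by rw [C.idem_om' hy]
      _ = y := h2
    have hzx : z * x = z := by
      have := C.lrbg2 x y
      rwa [C.idem_om' hx] at this
    have hyx : y * x = y := by
      calc y * x = (y * z) * x := by rw [hyz]
      _ = y * (z * x) := by rw [mul_assoc]
      _ = y * z := by rw [hzx]
      _ = y := hyz
    have step1 : C.xl ℓ' * x = C.xl ℓ' :=
      C.transfer_left hy (C.hxl ℓ').1 (hσy.trans ((C.hxl ℓ').2).symm) hyx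
    exact C.transfer_right hx (C.hxl ℓ).1 (hσx.trans ((C.hxl ℓ).2).symm) step1
  · rintro ⟨hle, hne⟩
    refine ⟨hne, C.xl ℓ, C.xl ℓ', (C.hxl ℓ).1, (C.hxl ℓ').1, (C.hxl ℓ).2, (C.hxl ℓ').2, ?_, ?_⟩
    · -- ω (x*y) * y = x*y
      set x := C.xl ℓ; set y := C.xl ℓ'
      have hyx : y * x = y := hle
      have hzz : (x * y) * (x * y) = x * y := by
        calc (x * y) * (x * y) = x * ((y * x) * y) := by
              rw [mul_assoc, ← mul_assoc y x y]
        _ = x * (y * y) := by rw [hyx]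
        _ = x * y := by rw [(C.hxl ℓ').1]
      rw [C.idem_om' hzz, mul_assoc, (C.hxl ℓ').1]
    · set x := C.xl ℓ; set y := C.xl ℓ'
      have hyx : y * x = y := hle
      rw [C.idem_om' (C.hxl ℓ').1, ← mul_assoc, hyx, (C.hxl ℓ').1]

noncomputable def muL (ℓ : L) : ℕ := (Finset.univ.filter (fun ℓ' => C.leL ℓ ℓ')).card

theorem mu_lt {a b : L} (hle : C.leL a b) (hne : a ≠ b) : C.muL b < C.muL a := by
  apply Finset.card_lt_card
  constructor
  · intro m hm
    rw [Finset.mem_filter] at hm ⊢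
    exact ⟨hm.1, C.leL_trans hle hm.2⟩
  · intro hsub
    have : a ∈ Finset.univ.filter (fun ℓ' => C.leL a ℓ') := by
      rw [Finset.mem_filter]; exact ⟨Finset.mem_univ a, C.leL_refl a⟩
    have := hsub this
    rw [Finset.mem_filter] at this
    exact hne (C.leL_antisymm hle this.2)

theorem Hmul (s t : S) : (Hs s : MonoidAlgebra ℂ S) * Hs t = Hs (s * t) := by
  rw [MonoidAlgebra.single_mul_single, one_mul]

theorem alpha {m : L} {s : S} (h : C.leL m (C.suppS s)) :
    (Hs s : MonoidAlgebra ℂ S) * C.u m = Hs s := by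
  have hterm : ∀ x ∈ Finset.univ.filter (fun x : S => x * x = x ∧ C.σ x = m),
      (Hs s : MonoidAlgebra ℂ S) * (C.c x • MonoidAlgebra.single x 1) = C.c x • Hs s := by
    intro x hx
    rw [Finset.mem_filter] at hx
    rw [mul_smul_comm, Hmul, C.absorb_of_le h hx.2.1 hx.2.2]
  rw [C.hu m, Finset.mul_sum, Finset.sum_congr rfl hterm, ← Finset.sum_smul, C.hc m, one_smul]

theorem mul_e_expand (a : MonoidAlgebra ℂ S) (ℓ : L) :
    a * C.e ℓ = a * C.u ℓ - ∑ ℓ' ∈ C.idxF ℓ, a * C.u ℓ * C.e ℓ' := by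
  rw [C.he' ℓ, mul_sub, Finset.mul_sum]
  simp only [mul_assoc]

theorem filter_le_eq_insert (p : L) :
    Finset.univ.filter (fun m' => C.leL p m') = insert p (C.idxF p) := by
  ext m'
  simp only [Finset.mem_filter, Finset.mem_univ, true_and, Finset.mem_insert, C.mem_idxF]
  constructor
  · intro h
    by_cases hh : m' = p
    · exact Or.inl hh
    · exact Or.inr ⟨h, fun hc => hh hc.symm⟩
  · rintro (rfl | ⟨h, _⟩)
    · exact C.leL_refl m'
    · exact h

theorem p_not_mem_idxF (p : L) : p ∉ C.idxF p := by
  rw [C.mem_idxF]; rintro ⟨-, h⟩; exact h rfl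

theorem starsum (t : S) :
    ∑ m' ∈ Finset.univ.filter (fun m' => C.leL (C.suppS t) m'),
      (Hs t : MonoidAlgebra ℂ S) * C.e m' = Hs t := by
  rw [C.filter_le_eq_insert, Finset.sum_insert (C.p_not_mem_idxF _)]
  rw [C.mul_e_expand, C.alpha (C.leL_refl _)]
  abel

theorem Fzero : ∀ (m : L) (s : S), ¬ C.leL (C.suppS s) m →
    (Hs s : MonoidAlgebra ℂ S) * C.e m = 0 := by
  suffices h : ∀ (n : ℕ) (m : L), C.muL m ≤ n → ∀ (s : S), ¬ C.leL (C.suppS s) m →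
      (Hs s : MonoidAlgebra ℂ S) * C.e m = 0 by
    intro m s hs; exact h (C.muL m) m le_rfl s hs
  intro n
  induction n with
  | zero =>
    intro m hm
    exfalso
    have : 0 < C.muL m := Finset.card_pos.mpr
      ⟨m, by rw [Finset.mem_filter]; exact ⟨Finset.mem_univ m, C.leL_refl m⟩⟩
    omega
  | succ n ih =>
    intro m hm s hs
    by_cases hmp : C.leL m (C.suppS s)
    · -- case I : m strictly below supp s
      have hne : m ≠ C.suppS s := by rintro rfl; exact hs (C.leL_refl _)
      rw [C.mul_e_expand, C.alpha hmp]
      have hsub : Finset.univ.filter (fun m' => C.leL (C.suppS s) m') ⊆ C.idxF m := by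
        intro m' hm'
        rw [Finset.mem_filter] at hm'
        rw [C.mem_idxF]
        refine ⟨C.leL_trans hmp hm'.2, ?_⟩
        rintro rfl
        exact hne (C.leL_antisymm hmp hm'.2)
      have hvanish : ∀ m' ∈ C.idxF m,
          m' ∉ Finset.univ.filter (fun m' => C.leL (C.suppS s) m') →
          (Hs s : MonoidAlgebra ℂ S) * C.e m' = 0 := by
        intro m' hm' hnot
        rw [C.mem_idxF] at hm'
        rw [Finset.mem_filter] at hnot
        push_neg at hnot
        have hlt : C.muL m' < C.muL m := C.mu_lt hm'.1 hm'.2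
        exact ih m' (by omega) s (hnot (Finset.mem_univ m'))
      rw [← Finset.sum_subset hsub hvanish, C.starsum s, sub_self]
    · -- case II : m and supp s incomparable
      have hsu : (Hs s : MonoidAlgebra ℂ S) * C.u m
          = ∑ x ∈ Finset.univ.filter (fun x : S => x * x = x ∧ C.σ x = m),
              C.c x • Hs (s * x) := by
        rw [C.hu m, Finset.mul_sum]
        exact Finset.sum_congr rfl (fun x hx => by rw [mul_smul_comm, Hmul])
      rw [C.mul_e_expand, hsu]
      have hswap : ∑ ℓ' ∈ C.idxF m,
            (∑ x ∈ Finset.univ.filter (fun x : S => x * x = x ∧ C.σ x = m),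
              C.c x • (Hs (s * x) : MonoidAlgebra ℂ S)) * C.e ℓ'
          = ∑ x ∈ Finset.univ.filter (fun x : S => x * x = x ∧ C.σ x = m),
              C.c x • ∑ ℓ' ∈ C.idxF m, (Hs (s * x) : MonoidAlgebra ℂ S) * C.e ℓ' := by
        calc _ = ∑ ℓ' ∈ C.idxF m,
            ∑ x ∈ Finset.univ.filter (fun x : S => x * x = x ∧ C.σ x = m),
              C.c x • ((Hs (s * x) : MonoidAlgebra ℂ S) * C.e ℓ') := by
              refine Finset.sum_congr rfl (fun ℓ' _ => ?_)
              rw [Finset.sum_mul]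
              exact Finset.sum_congr rfl (fun x _ => smul_mul_assoc _ _ _)
        _ = ∑ x ∈ Finset.univ.filter (fun x : S => x * x = x ∧ C.σ x = m),
            ∑ ℓ' ∈ C.idxF m, C.c x • ((Hs (s * x) : MonoidAlgebra ℂ S) * C.e ℓ') :=
              Finset.sum_comm
        _ = _ := Finset.sum_congr rfl (fun x _ => (Finset.smul_sum).symm)
      rw [hswap, ← Finset.sum_sub_distrib]
      apply Finset.sum_eq_zero
      intro x hx
      rw [← smul_sub]
      rw [Finset.mem_filter] at hx
      have inner : ∑ ℓ' ∈ C.idxF m, (Hs (s * x) : MonoidAlgebra ℂ S) * C.e ℓ' = Hs (s * x) := by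
        have hmq : C.leL m (C.suppS (s * x)) := by
          have := C.supp_mono_right s x
          rwa [C.supp_idem hx.2.1, hx.2.2] at this
        have hpq : C.leL (C.suppS s) (C.suppS (s * x)) := C.supp_mono s x
        have hsub : Finset.univ.filter (fun m' => C.leL (C.suppS (s * x)) m') ⊆ C.idxF m := by
          intro m' hm'
          rw [Finset.mem_filter] at hm'
          rw [C.mem_idxF]
          refine ⟨C.leL_trans hmq hm'.2, ?_⟩
          rintro rfl
          have heq : m = C.suppS (s * x) := C.leL_antisymm hmq hm'.2
          exact hs (by rw [heq]; exact hpq)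
        have hvanish : ∀ m' ∈ C.idxF m,
            m' ∉ Finset.univ.filter (fun m' => C.leL (C.suppS (s * x)) m') →
            (Hs (s * x) : MonoidAlgebra ℂ S) * C.e m' = 0 := by
          intro m' hm' hnot
          rw [C.mem_idxF] at hm'
          rw [Finset.mem_filter] at hnot
          push_neg at hnot
          have hlt : C.muL m' < C.muL m := C.mu_lt hm'.1 hm'.2
          exact ih m' (by omega) (s * x) (hnot (Finset.mem_univ m'))
        rw [← Finset.sum_subset hsub hvanish]
        exact C.starsum (s * x)
      rw [inner, sub_self, smul_zero]

theorem u_mul_u (ℓ : L) : C.u ℓ * C.u ℓ = C.u ℓ := by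
  have hterm : ∀ x ∈ Finset.univ.filter (fun x : S => x * x = x ∧ C.σ x = ℓ),
      (C.c x • MonoidAlgebra.single x 1 : MonoidAlgebra ℂ S) * C.u ℓ
        = C.c x • MonoidAlgebra.single x 1 := by
    intro x hx
    rw [Finset.mem_filter] at hx
    rw [smul_mul_assoc]
    congr 1
    have : C.leL ℓ (C.suppS x) := by
      rw [C.supp_idem hx.2.1, hx.2.2]; exact C.leL_refl ℓ
    exact C.alpha this
  nth_rewrite 1 [C.hu ℓ]
  rw [Finset.sum_mul, Finset.sum_congr rfl hterm, ← C.hu ℓ]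

theorem u_mul_e_self (ℓ : L) : C.u ℓ * C.e ℓ = C.e ℓ := by
  rw [C.mul_e_expand, C.u_mul_u]
  exact (C.he' ℓ).symm

theorem u_mul_e_zero {ℓ m : L} (h : ¬ C.leL ℓ m) : C.u ℓ * C.e m = 0 := by
  rw [C.hu ℓ, Finset.sum_mul]
  apply Finset.sum_eq_zero
  intro x hx
  rw [Finset.mem_filter] at hx
  rw [smul_mul_assoc, C.Fzero m x ?_, smul_zero]
  rw [C.supp_idem hx.2.1, hx.2.2]
  exact h

theorem e_mul_e : ∀ ℓ m : L, C.e ℓ * C.e m = if ℓ = m then C.e ℓ else 0 := by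
  suffices h : ∀ (n : ℕ) (ℓ : L), C.muL ℓ ≤ n → ∀ (m : L),
      C.e ℓ * C.e m = if ℓ = m then C.e ℓ else 0 by
    intro ℓ m; exact h (C.muL ℓ) ℓ le_rfl m
  intro n
  induction n with
  | zero =>
    intro ℓ hℓ
    exfalso
    have : 0 < C.muL ℓ := Finset.card_pos.mpr
      ⟨ℓ, by rw [Finset.mem_filter]; exact ⟨Finset.mem_univ ℓ, C.leL_refl ℓ⟩⟩
    omega
  | succ n ih =>
    intro ℓ hℓ m
    have hexp : C.e ℓ * C.e m
        = C.u ℓ * C.e m - ∑ ℓ' ∈ C.idxF ℓ, C.u ℓ * (C.e ℓ' * C.e m) := by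
      conv_lhs => rw [C.he' ℓ]
      rw [sub_mul, Finset.sum_mul]
      simp only [mul_assoc]
    rw [hexp]
    have hsum : ∑ ℓ' ∈ C.idxF ℓ, C.u ℓ * (C.e ℓ' * C.e m)
        = if m ∈ C.idxF ℓ then C.u ℓ * C.e m else 0 := by
      have hterm : ∀ ℓ' ∈ C.idxF ℓ, C.u ℓ * (C.e ℓ' * C.e m)
          = if ℓ' = m then C.u ℓ * C.e m else 0 := by
        intro ℓ' hℓ'
        rw [C.mem_idxF] at hℓ'
        have hlt : C.muL ℓ' < C.muL ℓ := C.mu_lt hℓ'.1 hℓ'.2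
        rw [ih ℓ' (by omega) m]
        by_cases hem : ℓ' = m
        · subst hem; rw [if_pos rfl, if_pos rfl]
        · rw [if_neg hem, if_neg hem, mul_zero]
      rw [Finset.sum_congr rfl hterm, Finset.sum_ite_eq' (C.idxF ℓ) m
        (fun _ => C.u ℓ * C.e m)]
    rw [hsum]
    by_cases heq : ℓ = m
    · subst heq
      rw [if_pos rfl, if_neg (C.p_not_mem_idxF ℓ), sub_zero, C.u_mul_e_self]
    · rw [if_neg heq]
      by_cases hmem : m ∈ C.idxF ℓ
      · rw [if_pos hmem, sub_self]
      · rw [if_neg hmem, sub_zero]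
        apply C.u_mul_e_zero
        intro hle
        exact hmem (C.mem_idxF.mpr ⟨hle, heq⟩)

theorem e_idem (ℓ : L) : C.e ℓ * C.e ℓ = C.e ℓ := by
  rw [C.e_mul_e, if_pos rfl]

theorem e_orth {ℓ m : L} (h : ℓ ≠ m) : C.e ℓ * C.e m = 0 := by
  rw [C.e_mul_e, if_neg h]

theorem supp_u {ℓ : L} {x : S} (h : (C.u ℓ).coeff x ≠ 0) : x * x = x ∧ C.σ x = ℓ := by
  by_contra hc
  apply h
  rw [C.hu ℓ, MonoidAlgebra.coeff_sum, Finset.sum_apply']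
  apply Finset.sum_eq_zero
  intro z hz
  rw [Finset.mem_filter] at hz
  rw [MonoidAlgebra.coeff_smul, Finsupp.smul_apply]
  rcases eq_or_ne z x with rfl | hne
  · exact absurd hz.2 hc
  · rw [MonoidAlgebra.coeff_single, Finsupp.single_apply, if_neg hne, smul_zero]

theorem supp_e {ℓ : L} {s : S} (h : (C.e ℓ).coeff s ≠ 0) : C.leL ℓ (C.suppS s) := by
  have h' : s ∈ (C.e ℓ).coeff.support := Finsupp.mem_support_iff.mpr h
  rw [C.he' ℓ, MonoidAlgebra.coeff_sub] at h'
  have h2 := Finsupp.support_sub h'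
  rw [Finset.mem_union] at h2
  rcases h2 with h2 | h2
  · rw [Finsupp.mem_support_iff] at h2
    obtain ⟨hidm, hσs⟩ := C.supp_u h2
    rw [C.supp_idem hidm, hσs]
    exact C.leL_refl ℓ
  · rw [MonoidAlgebra.coeff_sum] at h2
    have h3 := Finsupp.support_finset_sum h2
    rw [Finset.mem_biUnion] at h3
    obtain ⟨ℓ', hℓ', h4⟩ := h3
    have h5 := MonoidAlgebra.support_coeff_mul_subset _ _ h4
    rw [Finset.mem_mul] at h5
    obtain ⟨x, hx, w, hw, hxw⟩ := h5
    rw [Finsupp.mem_support_iff] at hx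
    obtain ⟨hidm, hσx⟩ := C.supp_u hx
    subst hxw
    have := C.supp_mono x w
    rwa [C.supp_idem hidm, hσx] at this

theorem eta : ∀ (m : L) {a : L}, C.leL a m → C.e m * Hs (C.xl a) = C.e m := by
  suffices h : ∀ (n : ℕ) (m : L), C.muL m ≤ n → ∀ (a : L), C.leL a m →
      C.e m * Hs (C.xl a) = C.e m by
    intro m a ha; exact h (C.muL m) m le_rfl a ha
  intro n
  induction n with
  | zero =>
    intro m hm
    exfalso
    have : 0 < C.muL m := Finset.card_pos.mpr
      ⟨m, by rw [Finset.mem_filter]; exact ⟨Finset.mem_univ m, C.leL_refl m⟩⟩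
    omega
  | succ n ih =>
    intro m hm a ha
    have hu1 : C.u m * Hs (C.xl a) = C.u m := by
      rw [C.hu m, Finset.sum_mul]
      apply Finset.sum_congr rfl
      intro z hz
      rw [Finset.mem_filter] at hz
      rw [smul_mul_assoc, Hmul]
      have hle : C.leL a (C.suppS z) := by
        rw [C.supp_idem hz.2.1, hz.2.2]; exact ha
      rw [C.absorb_of_le hle (C.hxl a).1 (C.hxl a).2]
    conv_lhs => rw [C.he' m]
    rw [sub_mul, Finset.sum_mul, hu1]
    have hterm : ∀ ℓ' ∈ C.idxF m, C.u m * C.e ℓ' * Hs (C.xl a) = C.u m * C.e ℓ' := by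
      intro ℓ' hℓ'
      rw [C.mem_idxF] at hℓ'
      have hlt : C.muL ℓ' < C.muL m := C.mu_lt hℓ'.1 hℓ'.2
      rw [mul_assoc, ih ℓ' (by omega) a (C.leL_trans ha hℓ'.1)]
    rw [Finset.sum_congr rfl hterm]
    exact (C.he' m).symm


/-- key vanishing: for `ℓ ⊏ m`, `H_g * e m * H_h * e ℓ = 0`. -/
theorem zero_term {ℓ m : L} (hle : C.leL ℓ m) (hne : ℓ ≠ m) (g h : S) :
    (Hs g : MonoidAlgebra ℂ S) * C.e m * Hs h * C.e ℓ = 0 := by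
  have hrep : C.e m = ∑ w ∈ (C.e m).coeff.support, MonoidAlgebra.single w ((C.e m).coeff w) :=
    (MonoidAlgebra.sum_coeff_single (C.e m)).symm
  rw [hrep, Finset.mul_sum, Finset.sum_mul, Finset.sum_mul]
  apply Finset.sum_eq_zero
  intro w hw
  rw [Finsupp.mem_support_iff] at hw
  have h1 : (Hs g : MonoidAlgebra ℂ S) * MonoidAlgebra.single w ((C.e m).coeff w)
      = MonoidAlgebra.single (g * w) ((C.e m).coeff w) := by
    rw [MonoidAlgebra.single_mul_single, one_mul]
  have h2 : (MonoidAlgebra.single (g * w) ((C.e m).coeff w) : MonoidAlgebra ℂ S) * Hs h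
      = MonoidAlgebra.single (g * w * h) ((C.e m).coeff w) := by
    rw [MonoidAlgebra.single_mul_single, mul_one]
  rw [h1, h2]
  have h3 : (MonoidAlgebra.single (g * w * h) ((C.e m).coeff w) : MonoidAlgebra ℂ S)
      = (C.e m).coeff w • Hs (g * w * h) := by
    rw [MonoidAlgebra.smul_single, smul_eq_mul, mul_one]
  rw [h3, smul_mul_assoc, C.Fzero ℓ (g * w * h) ?_, smul_zero]
  -- ¬ leL (suppS (g*w*h)) ℓ
  intro hcon
  have hm1 : C.leL m (C.suppS w) := C.supp_e hw
  have hm2 : C.leL (C.suppS w) (C.suppS (g * w)) := C.supp_mono_right g w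
  have hm3 : C.leL (C.suppS (g * w)) (C.suppS (g * w * h)) := C.supp_mono (g * w) h
  have : C.leL m ℓ := C.leL_trans (C.leL_trans (C.leL_trans hm1 hm2) hm3) hcon
  exact hne (C.leL_antisymm hle this)

theorem sand_single {ℓ : L} {g : S} (hg : C.ω g = C.xl ℓ) (h : S) :
    C.e ℓ * Hs g * C.e ℓ * Hs h * C.e ℓ = C.e ℓ * Hs (g * h) * C.e ℓ := by
  have hsuppg : C.suppS g = ℓ := by
    unfold suppS; rw [hg, (C.hxl ℓ).2]
  have hge : (Hs g : MonoidAlgebra ℂ S) * C.e ℓ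
      = Hs g - ∑ m ∈ C.idxF ℓ, Hs g * C.e m := by
    rw [C.mul_e_expand, C.alpha (by rw [hsuppg]; exact C.leL_refl ℓ)]
  calc C.e ℓ * Hs g * C.e ℓ * Hs h * C.e ℓ
      = C.e ℓ * ((Hs g * C.e ℓ) * Hs h * C.e ℓ) := by
        simp only [mul_assoc]
  _ = C.e ℓ * ((Hs g * Hs h) * C.e ℓ
        - ∑ m ∈ C.idxF ℓ, Hs g * C.e m * Hs h * C.e ℓ) := by
        rw [hge, sub_mul, sub_mul, Finset.sum_mul, Finset.sum_mul]
  _ = C.e ℓ * ((Hs (g * h)) * C.e ℓ) := by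
        rw [Hmul]
        congr 1
        rw [sub_eq_self]
        apply Finset.sum_eq_zero
        intro m hm
        rw [C.mem_idxF] at hm
        exact C.zero_term hm.1 hm.2 g h
  _ = C.e ℓ * Hs (g * h) * C.e ℓ := by rw [mul_assoc]

theorem sand_key (ℓ : L) : ∀ a ∈ Submodule.span ℂ
      {a : MonoidAlgebra ℂ S | ∃ s : S, C.ω s = C.xl ℓ ∧ a = MonoidAlgebra.single s 1},
    ∀ b ∈ Submodule.span ℂ
      {a : MonoidAlgebra ℂ S | ∃ s : S, C.ω s = C.xl ℓ ∧ a = MonoidAlgebra.single s 1},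
    C.e ℓ * a * C.e ℓ * b * C.e ℓ = C.e ℓ * (a * b) * C.e ℓ := by
  intro a ha
  induction ha using Submodule.span_induction with
  | mem x hx =>
    intro b hb
    induction hb using Submodule.span_induction with
    | mem y hy =>
      obtain ⟨s, hs, rfl⟩ := hx
      obtain ⟨t, ht, rfl⟩ := hy
      rw [C.sand_single hs t, MonoidAlgebra.single_mul_single, one_mul]
    | zero => simp
    | add y z _ _ hy hz => simp only [mul_add, add_mul, hy, hz]
    | smul r y _ hy => simp only [smul_mul_assoc, mul_smul_comm, hy]
  | zero => intro b hb; simp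
  | add y z _ _ hy hz =>
    intro b hb
    simp only [mul_add, add_mul, hy b hb, hz b hb]
  | smul r y _ hy =>
    intro b hb
    simp only [smul_mul_assoc, mul_smul_comm, hy b hb]

theorem sand (ℓ : L) {a b : MonoidAlgebra ℂ S}
    (ha : a ∈ Submodule.span ℂ
      {a : MonoidAlgebra ℂ S | ∃ s : S, C.ω s = C.xl ℓ ∧ a = MonoidAlgebra.single s 1})
    (hb : b ∈ Submodule.span ℂ
      {a : MonoidAlgebra ℂ S | ∃ s : S, C.ω s = C.xl ℓ ∧ a = MonoidAlgebra.single s 1}) :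
    (C.e ℓ * a * C.e ℓ) * (C.e ℓ * b * C.e ℓ) = C.e ℓ * (a * b) * C.e ℓ := by
  have h1 : (C.e ℓ * a * C.e ℓ) * (C.e ℓ * b * C.e ℓ)
      = C.e ℓ * a * (C.e ℓ * C.e ℓ) * b * C.e ℓ := by
    simp only [mul_assoc]
  rw [h1, C.e_idem, C.sand_key ℓ a ha b hb]

theorem sum_e : ∑ ℓ : L, C.e ℓ = 1 := by
  set ℓ0 := C.σ 1 with hl0
  have h1 : (1 : S) * 1 = 1 := mul_one 1
  have hu0 : C.u ℓ0 = 1 := by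
    have hset : Finset.univ.filter (fun x : S => x * x = x ∧ C.σ x = ℓ0) = {1} := by
      ext x
      simp only [Finset.mem_filter, Finset.mem_univ, true_and, Finset.mem_singleton]
      constructor
      · rintro ⟨hx, hσx⟩
        have := (C.hσ x 1 hx h1).mp hσx
        rw [C.idem_om' h1] at this
        have h2 := this.2
        rwa [one_mul] at h2
      · rintro rfl
        exact ⟨h1, rfl⟩
    rw [C.hu ℓ0, hset, Finset.sum_singleton]
    have : ∑ x ∈ Finset.univ.filter (fun x : S => x * x = x ∧ C.σ x = ℓ0), C.c x = 1 :=
      C.hc ℓ0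
    rw [hset, Finset.sum_singleton] at this
    rw [this, one_smul, MonoidAlgebra.one_def]
  have hidx : C.idxF ℓ0 = Finset.univ.erase ℓ0 := by
    ext ℓ'
    rw [Finset.mem_erase]
    constructor
    · intro h
      rw [C.mem_idxF] at h
      exact ⟨h.2.symm, Finset.mem_univ ℓ'⟩
    · rintro ⟨hne, -⟩
      rw [Finset.mem_filter]
      refine ⟨Finset.mem_univ ℓ', hne.symm, 1, C.xl ℓ', h1, (C.hxl ℓ').1, hl0.symm,
        (C.hxl ℓ').2, ?_, ?_⟩
      · rw [one_mul, C.idem_om' (C.hxl ℓ').1, (C.hxl ℓ').1]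
      · rw [one_mul, C.idem_om' (C.hxl ℓ').1, (C.hxl ℓ').1]
  have he0 : C.e ℓ0 = 1 - ∑ ℓ' ∈ Finset.univ.erase ℓ0, C.e ℓ' := by
    rw [C.he' ℓ0, hu0, hidx]
    congr 1
    exact Finset.sum_congr rfl (fun ℓ' _ => one_mul _)
  rw [← Finset.add_sum_erase Finset.univ C.e (Finset.mem_univ ℓ0), he0]
  abel

section Pil

/-- the partial "projection to the group algebra at `y`". -/
noncomputable def pil (y : S) : MonoidAlgebra ℂ S →ₗ[ℂ] MonoidAlgebra ℂ S where
  toFun a := ∑ t : S, a.coeff t •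
    (if C.ω (y * t) = y then (MonoidAlgebra.single (y * t) 1 : MonoidAlgebra ℂ S) else 0)
  map_add' a b := by
    have h : ∀ t : S, (a + b).coeff t = a.coeff t + b.coeff t := fun _ => rfl
    simp only [h, add_smul, Finset.sum_add_distrib]
  map_smul' r a := by
    have h : ∀ t : S, (r • a).coeff t = r * a.coeff t := fun _ => rfl
    simp only [h, RingHom.id_apply, Finset.smul_sum, mul_smul]

theorem pil_single (y t : S) (d : ℂ) :
    C.pil y (MonoidAlgebra.single t d)
      = if C.ω (y * t) = y then MonoidAlgebra.single (y * t) d else 0 := by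
  show (∑ t' : S, (MonoidAlgebra.single t d : MonoidAlgebra ℂ S).coeff t' •
    (if C.ω (y * t') = y then (MonoidAlgebra.single (y * t') 1 : MonoidAlgebra ℂ S) else 0)) = _
  rw [Finset.sum_eq_single t]
  · rw [MonoidAlgebra.coeff_single, Finsupp.single_apply, if_pos rfl]
    split_ifs with h
    · rw [MonoidAlgebra.smul_single, smul_eq_mul, mul_one]
    · rw [smul_zero]
  · intro t' _ hne
    rw [MonoidAlgebra.coeff_single, Finsupp.single_apply, if_neg (fun hc => hne hc.symm), zero_smul]
  · intro hmem
    exact absurd (Finset.mem_univ t) hmem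

theorem lrbg_c1 {y s t : S} (hy : y * y = y)
    (h1 : C.ω (y * s) = y) (h2 : C.ω (y * t) = y) :
    C.ω (y * (s * t)) = y ∧ (y * s) * (y * t) = y * (s * t) := by
  have hysy : y * s * y = y * s := by
    have := C.lrbg2 y s
    rwa [C.idem_om' hy] at this
  have heqA : (y * s) * (y * t) = y * (s * t) := by
    calc (y * s) * (y * t) = ((y * s) * y) * t := by simp only [mul_assoc]
    _ = (y * s) * t := by rw [hysy]
    _ = y * (s * t) := by rw [mul_assoc]
  obtain ⟨ws, hws1, hws2⟩ := inv_ex C.hpow (y * s)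
  obtain ⟨wt, hwt1, hwt2⟩ := inv_ex C.hpow (y * t)
  rw [h1] at hws1 hws2
  rw [h2] at hwt1 hwt2
  refine ⟨?_, heqA⟩
  have hzy : (y * (s * t)) * y = y * (s * t) := by
    have := C.lrbg2 y (s * t)
    rwa [C.idem_om' hy] at this
  refine om_eq C.hpow C.lrbg1 (w := wt * ws) hzy ?_
  calc (y * (s * t)) * (wt * ws) = ((y * s) * (y * t)) * (wt * ws) := by rw [heqA]
  _ = (y * s) * ((y * t) * wt) * ws := by simp only [mul_assoc]
  _ = (y * s) * y * ws := by rw [hwt1]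
  _ = (y * s) * ws := by rw [hysy]
  _ = y := hws1

theorem lrbg_c3 {y s t : S} (hy : y * y = y)
    (h : C.ω (y * (s * t)) = y) : C.ω (y * s) = y := by
  obtain ⟨w, hw1, hw2⟩ := inv_ex C.hpow (y * (s * t))
  rw [h] at hw1 hw2
  have hzy : (y * s) * y = y * s := by
    have := C.lrbg2 y s
    rwa [C.idem_om' hy] at this
  refine om_eq C.hpow C.lrbg1 (w := t * w) hzy ?_
  calc (y * s) * (t * w) = (y * (s * t)) * w := by simp only [mul_assoc]
  _ = y := hw1

theorem lrbg_c2 {y s t : S} (hy : y * y = y)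
    (h1 : C.ω (y * s) = y) (h : C.ω (y * (s * t)) = y) : C.ω (y * t) = y := by
  obtain ⟨wv, hwv1, hwv2⟩ := inv_ex C.hpow (y * (s * t))
  rw [h] at hwv1 hwv2
  obtain ⟨w1, hw11, hw12⟩ := inv_ex C.hpow (y * s)
  rw [h1] at hw11 hw12
  have hysy : y * s * y = y * s := by
    have := C.lrbg2 y s
    rwa [C.idem_om' hy] at this
  have heqA : (y * s) * (y * t) = y * (s * t) := by
    calc (y * s) * (y * t) = ((y * s) * y) * t := by simp only [mul_assoc]
    _ = (y * s) * t := by rw [hysy]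
    _ = y * (s * t) := by rw [mul_assoc]
  have hyt : y * t = w1 * (y * (s * t)) := by
    calc y * t = y * (y * t) := by rw [← mul_assoc, hy]
    _ = (w1 * (y * s)) * (y * t) := by rw [hw12]
    _ = w1 * ((y * s) * (y * t)) := by rw [mul_assoc]
    _ = w1 * (y * (s * t)) := by rw [heqA]
  have hzy : (y * t) * y = y * t := by
    have := C.lrbg2 y t
    rwa [C.idem_om' hy] at this
  refine om_eq C.hpow C.lrbg1 (w := wv * (y * s)) hzy ?_
  calc (y * t) * (wv * (y * s)) = (w1 * (y * (s * t))) * (wv * (y * s)) := by rw [hyt]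
  _ = w1 * ((y * (s * t)) * wv) * (y * s) := by simp only [mul_assoc]
  _ = w1 * y * (y * s) := by rw [hwv1]
  _ = w1 * ((y * y) * s) := by simp only [mul_assoc]
  _ = w1 * (y * s) := by rw [hy]
  _ = y := hw12

theorem pil_mul {y : S} (hy : y * y = y) (a b : MonoidAlgebra ℂ S) :
    C.pil y (a * b) = C.pil y a * C.pil y b := by
  induction a using MonoidAlgebra.induction_linear with
  | zero => simp
  | add f g hf hg => rw [add_mul, map_add, hf, hg, map_add, add_mul]
  | single s cc =>
    induction b using MonoidAlgebra.induction_linear with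
    | zero => simp
    | add f g hf hg => rw [mul_add, map_add, hf, hg, map_add, mul_add]
    | single t d =>
      rw [MonoidAlgebra.single_mul_single, C.pil_single, C.pil_single, C.pil_single]
      by_cases h1 : C.ω (y * s) = y
      · by_cases h2 : C.ω (y * t) = y
        · obtain ⟨hcond, heqA⟩ := C.lrbg_c1 hy h1 h2
          rw [if_pos hcond, if_pos h1, if_pos h2, MonoidAlgebra.single_mul_single, heqA]
        · rw [if_pos h1, if_neg h2, mul_zero, if_neg (fun hc => h2 (C.lrbg_c2 hy h1 hc))]
      · rw [if_neg h1, zero_mul, if_neg (fun hc => h1 (C.lrbg_c3 hy hc))]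

theorem pil_mem_span (y : S) (a : MonoidAlgebra ℂ S) :
    C.pil y a ∈ Submodule.span ℂ
      {a : MonoidAlgebra ℂ S | ∃ s : S, C.ω s = y ∧ a = MonoidAlgebra.single s 1} := by
  apply Submodule.sum_mem
  intro t _
  apply Submodule.smul_mem
  split_ifs with h
  · exact Submodule.subset_span ⟨y * t, h, rfl⟩
  · exact Submodule.zero_mem _

theorem pil_id_on_span {y : S} {a : MonoidAlgebra ℂ S}
    (ha : a ∈ Submodule.span ℂ
      {a : MonoidAlgebra ℂ S | ∃ s : S, C.ω s = y ∧ a = MonoidAlgebra.single s 1}) :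
    C.pil y a = a := by
  induction ha using Submodule.span_induction with
  | mem x hx =>
    obtain ⟨s, hs, rfl⟩ := hx
    have hys : y * s = s := by rw [← hs]; exact C.lrbg1 s
    rw [C.pil_single, hys, if_pos hs]
  | zero => simp
  | add x z _ _ hx hz => rw [map_add, hx, hz]
  | smul r x _ hx => rw [map_smul, hx]

theorem pil_iff {y y' t : S} (hy : y * y = y) (hy' : y' * y' = y')
    (hσσ : C.σ y = C.σ y') (h : C.ω (y' * t) = y') : C.ω (y * t) = y := by
  have hyy' : y * y' = y := C.sim_mul hy hy' hσσ
  have heq : y * (y' * t) = y * t := by rw [← mul_assoc, hyy']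
  have hzy : (y * t) * y = y * t := by
    have := C.lrbg2 y t
    rwa [C.idem_om' hy] at this
  obtain ⟨wv, hwv1, hwv2⟩ := inv_ex C.hpow (y' * t)
  rw [h] at hwv1 hwv2
  refine om_eq C.hpow C.lrbg1 (w := wv) hzy ?_
  calc (y * t) * wv = (y * (y' * t)) * wv := by rw [heq]
  _ = y * ((y' * t) * wv) := by rw [mul_assoc]
  _ = y * y' := by rw [hwv1]
  _ = y := hyy'

theorem pil_comp {y y' : S} (hy : y * y = y) (hy' : y' * y' = y')
    (hσσ : C.σ y = C.σ y') (a : MonoidAlgebra ℂ S) :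
    C.pil y (C.pil y' a) = C.pil y a := by
  induction a using MonoidAlgebra.induction_linear with
  | zero => simp
  | add f g hf hg => rw [map_add, map_add, hf, hg, map_add]
  | single t d =>
    rw [C.pil_single]
    by_cases h' : C.ω (y' * t) = y'
    · have hyy' : y * y' = y := C.sim_mul hy hy' hσσ
      have heq : y * (y' * t) = y * t := by rw [← mul_assoc, hyy']
      rw [if_pos h', C.pil_single, C.pil_single, heq]
    · rw [if_neg h', map_zero, C.pil_single,
        if_neg (fun hc => h' (C.pil_iff hy' hy hσσ.symm hc))]

theorem pil_u {y : S} (hy : y * y = y) (ℓ : L) :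
    C.pil y (C.u ℓ) = if y * C.xl ℓ = y then Hs y else 0 := by
  rw [C.hu ℓ, map_sum]
  have hterm : ∀ x ∈ Finset.univ.filter (fun x : S => x * x = x ∧ C.σ x = ℓ),
      C.pil y (C.c x • MonoidAlgebra.single x 1)
        = C.c x • (if y * C.xl ℓ = y then (Hs y : MonoidAlgebra ℂ S) else 0) := by
    intro x hx
    rw [Finset.mem_filter] at hx
    rw [map_smul, C.pil_single]
    congr 1
    have hiff : C.ω (y * x) = y ↔ y * x = y := by
      constructor
      · intro h
        have h2 := C.idem_om' (idem_mul C.hpow C.lrbg1 C.lrbg2 hy hx.2.1)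
        rw [← h2, h]
      · intro h
        rw [h, C.idem_om' hy]
    have hiff2 : y * x = y ↔ y * C.xl ℓ = y := by
      constructor
      · intro h
        exact C.transfer_right hx.2.1 (C.hxl ℓ).1 (hx.2.2.trans ((C.hxl ℓ).2).symm) h
      · intro h
        exact C.transfer_right (C.hxl ℓ).1 hx.2.1 ((C.hxl ℓ).2.trans hx.2.2.symm) h
    by_cases h : y * C.xl ℓ = y
    · rw [if_pos h, if_pos (hiff.mpr (hiff2.mpr h))]
      show MonoidAlgebra.single (y * x) 1 = Hs y
      rw [hiff2.mpr h]
    · rw [if_neg h, if_neg (fun hc => h (hiff2.mp (hiff.mp hc)))]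
  rw [Finset.sum_congr rfl hterm, ← Finset.sum_smul, C.hc ℓ, one_smul]

theorem pil_e {y : S} (hy : y * y = y) :
    ∀ ℓ : L, C.pil y (C.e ℓ) = if C.σ y = ℓ then Hs y else 0 := by
  suffices hh : ∀ (n : ℕ) (ℓ : L), C.muL ℓ ≤ n →
      C.pil y (C.e ℓ) = if C.σ y = ℓ then Hs y else 0 by
    intro ℓ; exact hh (C.muL ℓ) ℓ le_rfl
  intro n
  induction n with
  | zero =>
    intro ℓ hℓ
    exfalso
    have : 0 < C.muL ℓ := Finset.card_pos.mpr
      ⟨ℓ, by rw [Finset.mem_filter]; exact ⟨Finset.mem_univ ℓ, C.leL_refl ℓ⟩⟩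
    omega
  | succ n ih =>
    intro ℓ hℓ
    have hexp : C.pil y (C.e ℓ)
        = C.pil y (C.u ℓ) - ∑ ℓ' ∈ C.idxF ℓ, C.pil y (C.u ℓ) * C.pil y (C.e ℓ') := by
      rw [C.he' ℓ, map_sub, map_sum]
      congr 1
      exact Finset.sum_congr rfl (fun ℓ' _ => C.pil_mul hy _ _)
    rw [hexp, C.pil_u hy]
    by_cases hc1 : y * C.xl ℓ = y
    · rw [if_pos hc1]
      have hterm : ∀ ℓ' ∈ C.idxF ℓ,
          (Hs y : MonoidAlgebra ℂ S) * C.pil y (C.e ℓ')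
            = if ℓ' = C.σ y then Hs y else 0 := by
        intro ℓ' hℓ'
        rw [C.mem_idxF] at hℓ'
        rw [ih ℓ' (by have := C.mu_lt hℓ'.1 hℓ'.2; omega)]
        by_cases hh : C.σ y = ℓ'
        · rw [if_pos hh, if_pos hh.symm, Hmul, hy]
        · rw [if_neg hh, if_neg (fun hc => hh hc.symm), mul_zero]
      rw [Finset.sum_congr rfl hterm, Finset.sum_ite_eq' (C.idxF ℓ) (C.σ y)
        (fun _ => (Hs y : MonoidAlgebra ℂ S))]
      by_cases hσy : C.σ y = ℓ
      · rw [if_pos hσy, if_neg, sub_zero]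
        rw [C.mem_idxF]
        rintro ⟨-, hne⟩
        exact hne hσy.symm
      · rw [if_neg hσy, if_pos, sub_self]
        rw [C.mem_idxF]
        refine ⟨(C.bridge hy ℓ).mpr hc1, fun hc => hσy hc.symm⟩
    · rw [if_neg hc1]
      have hσy : C.σ y ≠ ℓ := by
        intro hc
        exact hc1 ((C.bridge hy ℓ).mp (by rw [hc]; exact C.leL_refl ℓ))
      rw [if_neg hσy]
      simp

end Pil

section Trace

theorem rep_univ (a : MonoidAlgebra ℂ S) :
    a = ∑ t : S, MonoidAlgebra.single t (a.coeff t) := by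
  calc a = ∑ t ∈ a.coeff.support, MonoidAlgebra.single t (a.coeff t) :=
      (MonoidAlgebra.sum_coeff_single a).symm
  _ = ∑ t : S, MonoidAlgebra.single t (a.coeff t) := by
    apply Finset.sum_subset (Finset.subset_univ _)
    intro t _ ht
    rw [Finsupp.notMem_support_iff.mp ht]
    simp

noncomputable def TrA (a : MonoidAlgebra ℂ S) : ℂ := ∑ s : S, ((Hs s : MonoidAlgebra ℂ S) * a).coeff s

theorem coeff_mul_left (s : S) (a : MonoidAlgebra ℂ S) :
    ((Hs s : MonoidAlgebra ℂ S) * a).coeff s = ∑ t : S, (if s * t = s then a.coeff t else 0) := by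
  have h1 : (Hs s : MonoidAlgebra ℂ S) * a
      = ∑ t : S, MonoidAlgebra.single (s * t) (a.coeff t) := by
    conv_lhs => rw [rep_univ a]
    rw [Finset.mul_sum]
    exact Finset.sum_congr rfl (fun t _ => by rw [MonoidAlgebra.single_mul_single, one_mul])
  rw [h1, MonoidAlgebra.coeff_sum, Finset.sum_apply']
  exact Finset.sum_congr rfl (fun t _ => by rw [MonoidAlgebra.coeff_single, Finsupp.single_apply])

theorem pil_diag_coeff {y : S} (hy : y * y = y) (a : MonoidAlgebra ℂ S) :
    (C.pil y a).coeff y = ∑ t : S, (if y * t = y then a.coeff t else 0) := by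
  show (∑ t : S, a.coeff t •
      (if C.ω (y * t) = y then (MonoidAlgebra.single (y * t) 1 : MonoidAlgebra ℂ S) else 0)).coeff y
    = _
  rw [MonoidAlgebra.coeff_sum, Finset.sum_apply']
  apply Finset.sum_congr rfl
  intro t _
  rw [MonoidAlgebra.coeff_smul, Finsupp.smul_apply]
  by_cases h : y * t = y
  · have hω : C.ω (y * t) = y := by rw [h, C.idem_om' hy]
    rw [if_pos h, if_pos hω, MonoidAlgebra.coeff_single, Finsupp.single_apply, if_pos h, smul_eq_mul, mul_one]
  · rw [if_neg h]
    by_cases hω : C.ω (y * t) = y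
    · rw [if_pos hω, MonoidAlgebra.coeff_single, Finsupp.single_apply, if_neg h, smul_zero]
    · rw [if_neg hω]
      show a.coeff t • (0 : MonoidAlgebra ℂ S).coeff y = 0
      simp

theorem card_fix (t : S) :
    ((Finset.univ.filter (fun s : S => s * t = s)).card : ℂ)
      = ∑ y ∈ Finset.univ.filter (fun y : S => y * y = y),
          (if y * t = y then ((Finset.univ.filter (fun s : S => C.ω s = y)).card : ℂ) else 0) := by
  have hcard := Finset.card_eq_sum_card_fiberwise
    (f := C.ω) (s := Finset.univ.filter (fun s : S => s * t = s))
    (t := (Finset.univ.filter (fun y : S => y * y = y)).filter (fun y => y * t = y)) ?_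
  · conv_rhs => rw [← Finset.sum_filter]
    rw [hcard]
    push_cast
    apply Finset.sum_congr rfl
    intro y hy
    rw [Finset.mem_filter, Finset.mem_filter] at hy
    congr 2
    ext s
    simp only [Finset.mem_filter, Finset.mem_univ, true_and]
    constructor
    · rintro ⟨-, hs⟩; exact hs
    · intro hs
      refine ⟨?_, hs⟩
      have hωt : C.ω s * t = C.ω s := by rw [hs]; exact hy.2
      exact absorb C.lrbg2 hωt
  · intro s hs
    rw [Finset.mem_coe, Finset.mem_filter] at hs
    rw [Finset.mem_coe, Finset.mem_filter, Finset.mem_filter]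
    exact ⟨⟨Finset.mem_univ _, C.hidem s⟩, om_absorb C.hpow hs.2⟩

theorem Tr_dec (a : MonoidAlgebra ℂ S) :
    TrA a = ∑ y ∈ Finset.univ.filter (fun y : S => y * y = y),
      ((Finset.univ.filter (fun s : S => C.ω s = y)).card : ℂ) * (C.pil y a).coeff y := by
  unfold TrA
  calc ∑ s : S, ((Hs s : MonoidAlgebra ℂ S) * a).coeff s
      = ∑ s : S, ∑ t : S, (if s * t = s then a.coeff t else 0) :=
        Finset.sum_congr rfl (fun s _ => coeff_mul_left s a)
  _ = ∑ t : S, ∑ s : S, (if s * t = s then a.coeff t else 0) := Finset.sum_comm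
  _ = ∑ t : S, ((Finset.univ.filter (fun s : S => s * t = s)).card : ℂ) * a.coeff t := by
      apply Finset.sum_congr rfl
      intro t _
      rw [← Finset.sum_filter, Finset.sum_const, nsmul_eq_mul]
  _ = ∑ t : S, ∑ y ∈ Finset.univ.filter (fun y : S => y * y = y),
        (if y * t = y then ((Finset.univ.filter (fun s : S => C.ω s = y)).card : ℂ) else 0)
          * a.coeff t := by
      apply Finset.sum_congr rfl
      intro t _
      rw [C.card_fix t, Finset.sum_mul]
  _ = ∑ y ∈ Finset.univ.filter (fun y : S => y * y = y),
      ((Finset.univ.filter (fun s : S => C.ω s = y)).card : ℂ) * (C.pil y a).coeff y := by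
      rw [Finset.sum_comm]
      apply Finset.sum_congr rfl
      intro y hy
      rw [Finset.mem_filter] at hy
      rw [C.pil_diag_coeff hy.2 a, Finset.mul_sum]
      apply Finset.sum_congr rfl
      intro t _
      by_cases h : y * t = y
      · rw [if_pos h, if_pos h]
      · rw [if_neg h, if_neg h, zero_mul, mul_zero]

noncomputable def bS : Module.Basis S ℂ (MonoidAlgebra ℂ S) := MonoidAlgebra.basis S ℂ

theorem TrA_eq_trace (q : MonoidAlgebra ℂ S) :
    TrA q = LinearMap.trace ℂ (MonoidAlgebra ℂ S) (LinearMap.mulRight ℂ q) := by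
  rw [LinearMap.trace_eq_matrix_trace ℂ (bS (S := S))]
  rw [Matrix.trace]
  apply Finset.sum_congr rfl
  intro s _
  rw [Matrix.diag_apply, LinearMap.toMatrix_apply]
  rfl

theorem pil_vanish_imp_zero {q : MonoidAlgebra ℂ S} (hq : q * q = q)
    (hpi : ∀ y : S, y * y = y → C.pil y q = 0) : q = 0 := by
  by_contra h0
  have htr0 : TrA q = 0 := by
    rw [C.Tr_dec q]
    apply Finset.sum_eq_zero
    intro y hy
    rw [Finset.mem_filter] at hy
    rw [hpi y hy.2]
    simp
  have hfin : Module.Finite ℂ (MonoidAlgebra ℂ S) :=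
    Module.Finite.of_basis (MonoidAlgebra.basis S ℂ)
  set R := LinearMap.mulRight ℂ q with hR
  have hproj : LinearMap.IsProj (LinearMap.range R) R := by
    constructor
    · intro x; exact LinearMap.mem_range_self _ x
    · rintro x ⟨z, rfl⟩
      show z * q * q = z * q
      rw [mul_assoc, hq]
  haveI f1 : Module.Free ℂ (LinearMap.range R) := Module.Free.of_divisionRing ℂ _
  haveI f2 : Module.Free ℂ (LinearMap.ker R) := Module.Free.of_divisionRing ℂ _
  haveI f3 : Module.Finite ℂ (LinearMap.range R) := Module.Finite.range R
  haveI f4 : Module.Finite ℂ (LinearMap.ker R) :=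
    FiniteDimensional.finiteDimensional_submodule _
  have htr : TrA q = (Module.finrank ℂ (LinearMap.range R) : ℂ) := by
    rw [TrA_eq_trace q, ← hR, hproj.trace]
  have hmem : q ∈ LinearMap.range R := ⟨1, one_mul q⟩
  have hpos : 0 < Module.finrank ℂ (LinearMap.range R) := by
    haveI : Nontrivial (LinearMap.range R) := by
      refine Submodule.nontrivial_iff_ne_bot.mpr ?_
      intro h; rw [h] at hmem; simp at hmem; exact h0 hmem
    exact Module.finrank_pos
  rw [htr0] at htr
  have : (Module.finrank ℂ (LinearMap.range R) : ℂ) ≠ 0 :=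
    Nat.cast_ne_zero.mpr hpos.ne'
  exact this htr.symm

end Trace

theorem span_unit_left {y : S} {a : MonoidAlgebra ℂ S}
    (ha : a ∈ Submodule.span ℂ
      {a : MonoidAlgebra ℂ S | ∃ s : S, C.ω s = y ∧ a = MonoidAlgebra.single s 1}) :
    (Hs y : MonoidAlgebra ℂ S) * a = a := by
  induction ha using Submodule.span_induction with
  | mem x hx =>
    obtain ⟨s, hs, rfl⟩ := hx
    rw [Hmul]
    have : y * s = s := by rw [← hs]; exact C.lrbg1 s
    rw [this]
  | zero => simp
  | add x z _ _ hx hz => rw [mul_add, hx, hz]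
  | smul r x _ hx => rw [mul_smul_comm, hx]

theorem span_unit_right {y : S} {a : MonoidAlgebra ℂ S}
    (ha : a ∈ Submodule.span ℂ
      {a : MonoidAlgebra ℂ S | ∃ s : S, C.ω s = y ∧ a = MonoidAlgebra.single s 1}) :
    a * (Hs y : MonoidAlgebra ℂ S) = a := by
  induction ha using Submodule.span_induction with
  | mem x hx =>
    obtain ⟨s, hs, rfl⟩ := hx
    rw [Hmul]
    have : s * y = s := by rw [← hs]; exact s_om C.lrbg2 s
    rw [this]
  | zero => simp
  | add x z _ _ hx hz => rw [add_mul, hx, hz]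
  | smul r x _ hx => rw [smul_mul_assoc, hx]

end Setup
end LRBG19

/-- (Theorem 4.2: CSoPOI for an LRBG algebra.) Let `S` be a finite
monoid which is an LRBG, `σ : S → L` realize the support lattice on idempotents,
`(c, u)` a homogeneous section of the support map, `e : L → ℂ[S]` the Saliola
idempotents satisfying the defining recursion, and for each `ℓ ∈ L` let
`(E ℓ i)_{i ∈ I ℓ}` be a complete system of primitive orthogonal idempotents of the
group algebra `ℂ[G_{x_ℓ}]` (identified with the span of `{H_s : ω s = x_ℓ}`).
Then the elements `e_{(ℓ,i)} := (e ℓ)·(E ℓ i)·(e ℓ)` form a complete system of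
primitive orthogonal idempotents of `ℂ[S]`. -/
theorem lrbg_CSoPOI {S : Type*} [Monoid S] [Fintype S] {L : Type*} [Fintype L]
    (ω : S → S)
    (hidem : ∀ s : S, ω s * ω s = ω s)
    (hpow : ∀ s : S, ∃ n : ℕ, ω s = (fun t => t * s)^[n] s)
    (lrbg1 : ∀ s : S, ω s * s = s)
    (lrbg2 : ∀ s t : S, s * t * ω s = s * t)
    (σ : S → L)
    (hσsurj : ∀ ℓ : L, ∃ x : S, x * x = x ∧ σ x = ℓ)
    (hσ : ∀ x y : S, x * x = x → y * y = y →
      (σ x = σ y ↔ (ω x * y = x ∧ ω y * x = y)))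
    (c : S → ℂ) (u : L → MonoidAlgebra ℂ S)
    (hu : ∀ ℓ : L, u ℓ = ∑ x ∈ Finset.univ.filter (fun x : S => x * x = x ∧ σ x = ℓ),
        c x • (MonoidAlgebra.single x 1 : MonoidAlgebra ℂ S))
    (hc : ∀ ℓ : L, ∑ x ∈ Finset.univ.filter (fun x : S => x * x = x ∧ σ x = ℓ), c x = 1)
    (e : L → MonoidAlgebra ℂ S)
    (he : ∀ ℓ : L, e ℓ = u ℓ - ∑ ℓ' ∈ Finset.univ.filter (fun ℓ' : L =>
        ℓ ≠ ℓ' ∧ ∃ x y : S, x * x = x ∧ y * y = y ∧ σ x = ℓ ∧ σ y = ℓ' ∧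
          ω (x * y) * y = x * y ∧ ω y * (x * y) = y),
        u ℓ * e ℓ')
    (xl : L → S)
    (hxl : ∀ ℓ : L, xl ℓ * xl ℓ = xl ℓ ∧ σ (xl ℓ) = ℓ)
    (I : L → Type*) [∀ ℓ, Fintype (I ℓ)]
    (E : ∀ ℓ : L, I ℓ → MonoidAlgebra ℂ S)
    (hEmem : ∀ (ℓ : L) (i : I ℓ), E ℓ i ∈ Submodule.span ℂ
        {a : MonoidAlgebra ℂ S | ∃ s : S, ω s = xl ℓ ∧ a = MonoidAlgebra.single s 1})
    (hEidem : ∀ (ℓ : L) (i : I ℓ), E ℓ i * E ℓ i = E ℓ i)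
    (hEorth : ∀ (ℓ : L) (i j : I ℓ), i ≠ j → E ℓ i * E ℓ j = 0)
    (hEsum : ∀ ℓ : L, ∑ i : I ℓ, E ℓ i = MonoidAlgebra.single (xl ℓ) 1)
    (hEprim : ∀ (ℓ : L) (i : I ℓ), E ℓ i ≠ 0 ∧
      ¬ ∃ e₁ e₂ : MonoidAlgebra ℂ S,
        e₁ ∈ Submodule.span ℂ
          {a : MonoidAlgebra ℂ S | ∃ s : S, ω s = xl ℓ ∧ a = MonoidAlgebra.single s 1} ∧
        e₂ ∈ Submodule.span ℂ
          {a : MonoidAlgebra ℂ S | ∃ s : S, ω s = xl ℓ ∧ a = MonoidAlgebra.single s 1} ∧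
        e₁ ≠ 0 ∧ e₂ ≠ 0 ∧ e₁ * e₁ = e₁ ∧ e₂ * e₂ = e₂ ∧ e₁ * e₂ = 0 ∧ e₂ * e₁ = 0 ∧
        E ℓ i = e₁ + e₂) :
    (∀ (ℓ : L) (i : I ℓ),
      (e ℓ * E ℓ i * e ℓ) * (e ℓ * E ℓ i * e ℓ) = e ℓ * E ℓ i * e ℓ) ∧
    (∀ (ℓ ℓ' : L) (i : I ℓ) (i' : I ℓ'), ℓ ≠ ℓ' →
      (e ℓ * E ℓ i * e ℓ) * (e ℓ' * E ℓ' i' * e ℓ') = 0) ∧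
    (∀ (ℓ : L) (i i' : I ℓ), i ≠ i' →
      (e ℓ * E ℓ i * e ℓ) * (e ℓ * E ℓ i' * e ℓ) = 0) ∧
    (∑ ℓ : L, ∑ i : I ℓ, e ℓ * E ℓ i * e ℓ) = 1 ∧
    (∀ (ℓ : L) (i : I ℓ), e ℓ * E ℓ i * e ℓ ≠ 0 ∧
      ¬ ∃ e₁ e₂ : MonoidAlgebra ℂ S,
        e₁ ≠ 0 ∧ e₂ ≠ 0 ∧ e₁ * e₁ = e₁ ∧ e₂ * e₂ = e₂ ∧ e₁ * e₂ = 0 ∧ e₂ * e₁ = 0 ∧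
        e ℓ * E ℓ i * e ℓ = e₁ + e₂) := by
  classical
  set C : LRBG19.Setup S L :=
    ⟨ω, σ, xl, c, u, e, hidem, hpow, lrbg1, lrbg2, hσ, hxl, hu, hc, he⟩ with hC
  -- C-free restatements of the key lemmas ------------------------------------
  have heidem : ∀ ℓ : L, e ℓ * e ℓ = e ℓ := fun ℓ => C.e_idem ℓ
  have heorth : ∀ {ℓ m : L}, ℓ ≠ m → e ℓ * e m = 0 := fun h => C.e_orth h
  have hsand : ∀ (ℓ : L) {a b : MonoidAlgebra ℂ S},
      a ∈ Submodule.span ℂ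
        {a : MonoidAlgebra ℂ S | ∃ s : S, ω s = xl ℓ ∧ a = MonoidAlgebra.single s 1} →
      b ∈ Submodule.span ℂ
        {a : MonoidAlgebra ℂ S | ∃ s : S, ω s = xl ℓ ∧ a = MonoidAlgebra.single s 1} →
      (e ℓ * a * e ℓ) * (e ℓ * b * e ℓ) = e ℓ * (a * b) * e ℓ := by
    intro ℓ a b ha hb
    exact C.sand ℓ ha hb
  have hsume : ∑ ℓ : L, e ℓ = 1 := C.sum_e
  have heta : ∀ ℓ : L, e ℓ * MonoidAlgebra.single (xl ℓ) 1 = e ℓ :=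
    fun ℓ => C.eta ℓ (C.leL_refl ℓ)
  -- π at the distinguished idempotent ---------------------------------------
  have hxi : ∀ ℓ : L, xl ℓ * xl ℓ = xl ℓ := fun ℓ => (hxl ℓ).1
  have hpil_f : ∀ (ℓ : L) (i : I ℓ),
      C.pil (xl ℓ) (e ℓ * E ℓ i * e ℓ) = E ℓ i := by
    intro ℓ i
    have h1 : C.pil (xl ℓ) (e ℓ) = MonoidAlgebra.single (xl ℓ) 1 := by
      have := C.pil_e (hxi ℓ) ℓ
      rwa [if_pos (hxl ℓ).2] at this
    have h2 : C.pil (xl ℓ) (E ℓ i) = E ℓ i := C.pil_id_on_span (hEmem ℓ i)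
    rw [C.pil_mul (hxi ℓ), C.pil_mul (hxi ℓ), h1, h2,
      C.span_unit_left (hEmem ℓ i), C.span_unit_right (hEmem ℓ i)]
  -- main conjunction ----------------------------------------------------------
  refine ⟨?_, ?_, ?_, ?_, ?_⟩
  · -- idempotency
    intro ℓ i
    rw [hsand ℓ (hEmem ℓ i) (hEmem ℓ i), hEidem ℓ i]
  · -- orthogonality across different supports
    intro ℓ ℓ' i i' hne
    have hassoc : (e ℓ * E ℓ i * e ℓ) * (e ℓ' * E ℓ' i' * e ℓ')
        = e ℓ * E ℓ i * (e ℓ * e ℓ') * E ℓ' i' * e ℓ' := by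
      simp only [mul_assoc]
    rw [hassoc, heorth hne, mul_zero, zero_mul, zero_mul]
  · -- orthogonality at a fixed support
    intro ℓ i i' hne
    rw [hsand ℓ (hEmem ℓ i) (hEmem ℓ i'), hEorth ℓ i i' hne, mul_zero, zero_mul]
  · -- the sum is 1
    have hinner : ∀ ℓ : L, ∑ i : I ℓ, e ℓ * E ℓ i * e ℓ = e ℓ := by
      intro ℓ
      rw [← Finset.sum_mul, ← Finset.mul_sum, hEsum ℓ, heta ℓ, heidem ℓ]
    rw [Finset.sum_congr rfl (fun ℓ _ => hinner ℓ), hsume]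
  · -- primitivity
    intro ℓ i
    constructor
    · intro h0
      have := hpil_f ℓ i
      rw [h0, map_zero] at this
      exact (hEprim ℓ i).1 this.symm
    · rintro ⟨e₁, e₂, h1n, h2n, h11, h22, h12, h21, hsum⟩
      -- the corner projections
      set f := e ℓ * E ℓ i * e ℓ with hf
      have hfe : ∀ q : MonoidAlgebra ℂ S, (f = e₁ + e₂) → True := fun _ _ => trivial
      have hfq1 : f * e₁ = e₁ := by rw [hsum, add_mul, h11, h21, add_zero]
      have hq1f : e₁ * f = e₁ := by rw [hsum, mul_add, h11, h12, add_zero]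
      have hfq2 : f * e₂ = e₂ := by rw [hsum, add_mul, h22, h12, zero_add]
      have hq2f : e₂ * f = e₂ := by rw [hsum, mul_add, h22, h21, zero_add]
      -- key elimination: a nonzero idempotent in the corner with vanishing
      -- projection at `xl ℓ` must vanish.
      have key : ∀ q : MonoidAlgebra ℂ S, q * q = q → f * q = q → q * f = q →
          C.pil (xl ℓ) q = 0 → q = 0 := by
        intro q hq hfq hqf hpq
        apply C.pil_vanish_imp_zero hq
        intro y hy
        by_cases hσy : σ y = ℓ
        · have hσσ1 : σ (xl ℓ) = σ y := by rw [(hxl ℓ).2, hσy]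
          have hcomp1 : C.pil (xl ℓ) (C.pil y q) = C.pil (xl ℓ) q :=
            C.pil_comp (hxi ℓ) hy hσσ1 q
          calc C.pil y q
              = C.pil y (C.pil y q) := (C.pil_id_on_span (C.pil_mem_span y q)).symm
          _ = C.pil y (C.pil (xl ℓ) (C.pil y q)) :=
              (C.pil_comp hy (hxi ℓ) hσσ1.symm (C.pil y q)).symm
          _ = C.pil y (C.pil (xl ℓ) q) := by rw [hcomp1]
          _ = C.pil y 0 := by rw [hpq]
          _ = 0 := map_zero _
        · have hpf : C.pil y f = 0 := by
            rw [hf, C.pil_mul hy, C.pil_e hy ℓ, if_neg hσy, mul_zero]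
          calc C.pil y q = C.pil y (f * q * f) := by rw [hfq, hqf]
          _ = C.pil y (f * q) * C.pil y f := C.pil_mul hy _ _
          _ = 0 := by rw [hpf, mul_zero]
      -- projections of the two pieces
      have hb1 : C.pil (xl ℓ) e₁ * C.pil (xl ℓ) e₁ = C.pil (xl ℓ) e₁ := by
        rw [← C.pil_mul (hxi ℓ), h11]
      have hb2 : C.pil (xl ℓ) e₂ * C.pil (xl ℓ) e₂ = C.pil (xl ℓ) e₂ := by
        rw [← C.pil_mul (hxi ℓ), h22]
      have hb12 : C.pil (xl ℓ) e₁ * C.pil (xl ℓ) e₂ = 0 := by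
        rw [← C.pil_mul (hxi ℓ), h12, map_zero]
      have hb21 : C.pil (xl ℓ) e₂ * C.pil (xl ℓ) e₁ = 0 := by
        rw [← C.pil_mul (hxi ℓ), h21, map_zero]
      have hbsum : E ℓ i = C.pil (xl ℓ) e₁ + C.pil (xl ℓ) e₂ := by
        rw [← map_add, ← hsum, hf, hpil_f ℓ i]
      have hzero : C.pil (xl ℓ) e₁ = 0 ∨ C.pil (xl ℓ) e₂ = 0 := by
        by_contra hcon
        push_neg at hcon
        exact (hEprim ℓ i).2 ⟨C.pil (xl ℓ) e₁, C.pil (xl ℓ) e₂,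
          C.pil_mem_span (xl ℓ) e₁, C.pil_mem_span (xl ℓ) e₂,
          hcon.1, hcon.2, hb1, hb2, hb12, hb21, hbsum⟩
      rcases hzero with hz | hz
      · exact h1n (key e₁ h11 hfq1 hq1f hz)
      · exact h2n (key e₂ h22 hfq2 hq2f hz)
end
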